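/- arXiv:1306.2540 — 13 statements merged into one kernel-verified Lean document; each statement's English description precedes it below -/
import Mathlib

section
/- Let M be a map with flag set F and generators s0, s1, s2, and let r0, r1, r2 be the truncation generators on F × {0,1,2}. Then each of r0, r1, r2 is a fixed-point-free involution, r0∘r2 = r2∘r0 and this composite is also a fixed-point-free involution, and (r1∘r2)^3 is the identity permutation of F × {0,1,2}. -/
/-!
All relations are checked pointwise on the three layers `F × {i}`. The least immediate one is
`(r1 * r2)^3 = 1`: `r1 * r2` cycles `(Φ, 0) ↦ (Φ, 1) ↦ (s2 Φ, 2) ↦ (s2 (s2 Φ), 0) = (Φ, 0)`.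
-/

open Equiv Function

theorem Equiv.Perm.mul_self_eq_one_iff_involutive {α : Type*} {σ : Perm α} :
    σ * σ = 1 ↔ Involutive σ :=
  Perm.ext_iff

theorem Prod.forall_fin_three {F : Type*} {p : F × Fin 3 → Prop} :
    (∀ x, p x) ↔ ∀ Φ, p (Φ, 0) ∧ p (Φ, 1) ∧ p (Φ, 2) := by
  refine ⟨fun h Φ => ⟨h _, h _, h _⟩, fun h ⟨Φ, i⟩ => ?_⟩
  fin_cases i
  exacts [(h Φ).1, (h Φ).2.1, (h Φ).2.2]

namespace Truncation

variable {F : Type*} {s0 s1 s2 : Perm F} {r0 r1 r2 : Perm (F × Fin 3)}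

theorem involutive_r0
    (hr0 : ∀ Φ, r0 (Φ, 0) = (s1 Φ, 0) ∧ r0 (Φ, 1) = (s0 Φ, 1) ∧ r0 (Φ, 2) = (s1 Φ, 2))
    (h0 : Involutive s0) (h1 : Involutive s1) : Involutive r0 :=
  Prod.forall_fin_three.2 fun Φ => by simp [hr0, h0 Φ, h1 Φ]

theorem r0_apply_ne
    (hr0 : ∀ Φ, r0 (Φ, 0) = (s1 Φ, 0) ∧ r0 (Φ, 1) = (s0 Φ, 1) ∧ r0 (Φ, 2) = (s1 Φ, 2))
    (h0 : ∀ Φ, s0 Φ ≠ Φ) (h1 : ∀ Φ, s1 Φ ≠ Φ) : ∀ x, r0 x ≠ x :=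
  Prod.forall_fin_three.2 fun Φ => by simp [hr0, h0 Φ, h1 Φ]

theorem involutive_r1
    (hr1 : ∀ Φ, r1 (Φ, 0) = (s2 Φ, 0) ∧ r1 (Φ, 1) = (Φ, 2) ∧ r1 (Φ, 2) = (Φ, 1))
    (h2 : Involutive s2) : Involutive r1 :=
  Prod.forall_fin_three.2 fun Φ => by simp [hr1, h2 Φ]

theorem r1_apply_ne
    (hr1 : ∀ Φ, r1 (Φ, 0) = (s2 Φ, 0) ∧ r1 (Φ, 1) = (Φ, 2) ∧ r1 (Φ, 2) = (Φ, 1))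
    (h2 : ∀ Φ, s2 Φ ≠ Φ) : ∀ x, r1 x ≠ x :=
  Prod.forall_fin_three.2 fun Φ => by simp [hr1, h2 Φ]

theorem involutive_r2
    (hr2 : ∀ Φ, r2 (Φ, 0) = (Φ, 2) ∧ r2 (Φ, 1) = (s2 Φ, 1) ∧ r2 (Φ, 2) = (Φ, 0))
    (h2 : Involutive s2) : Involutive r2 :=
  Prod.forall_fin_three.2 fun Φ => by simp [hr2, h2 Φ]

theorem r2_apply_ne
    (hr2 : ∀ Φ, r2 (Φ, 0) = (Φ, 2) ∧ r2 (Φ, 1) = (s2 Φ, 1) ∧ r2 (Φ, 2) = (Φ, 0))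
    (h2 : ∀ Φ, s2 Φ ≠ Φ) : ∀ x, r2 x ≠ x :=
  Prod.forall_fin_three.2 fun Φ => by simp [hr2, h2 Φ]

theorem commute_r0_r2
    (hr0 : ∀ Φ, r0 (Φ, 0) = (s1 Φ, 0) ∧ r0 (Φ, 1) = (s0 Φ, 1) ∧ r0 (Φ, 2) = (s1 Φ, 2))
    (hr2 : ∀ Φ, r2 (Φ, 0) = (Φ, 2) ∧ r2 (Φ, 1) = (s2 Φ, 1) ∧ r2 (Φ, 2) = (Φ, 0))
    (h02 : Commute s0 s2) : Commute r0 r2 :=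
  Perm.ext <| Prod.forall_fin_three.2 fun Φ => by
    simp [Perm.mul_apply, hr0, hr2, ← Perm.mul_apply s0 s2, h02.eq]

theorem r0_mul_r2_apply_ne
    (hr0 : ∀ Φ, r0 (Φ, 0) = (s1 Φ, 0) ∧ r0 (Φ, 1) = (s0 Φ, 1) ∧ r0 (Φ, 2) = (s1 Φ, 2))
    (hr2 : ∀ Φ, r2 (Φ, 0) = (Φ, 2) ∧ r2 (Φ, 1) = (s2 Φ, 1) ∧ r2 (Φ, 2) = (Φ, 0))
    (h02 : ∀ Φ, (s0 * s2) Φ ≠ Φ) : ∀ x, (r0 * r2) x ≠ x :=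
  Prod.forall_fin_three.2 fun Φ => by simpa [Perm.mul_apply, hr0, hr2] using h02 Φ

theorem r1_mul_r2_pow_three
    (hr1 : ∀ Φ, r1 (Φ, 0) = (s2 Φ, 0) ∧ r1 (Φ, 1) = (Φ, 2) ∧ r1 (Φ, 2) = (Φ, 1))
    (hr2 : ∀ Φ, r2 (Φ, 0) = (Φ, 2) ∧ r2 (Φ, 1) = (s2 Φ, 1) ∧ r2 (Φ, 2) = (Φ, 0))
    (h2 : Involutive s2) : (r1 * r2) ^ 3 = 1 :=
  Perm.ext <| Prod.forall_fin_three.2 fun Φ => by simp [pow_succ, Perm.mul_apply, hr1, hr2, h2 Φ]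

end Truncation

open Truncation in
theorem truncation_generators_relations_general
    {F : Type*}
    (s0 s1 s2 : Equiv.Perm F)
    (hs0i : s0 * s0 = 1) (hs0f : ∀ x, s0 x ≠ x)
    (hs1i : s1 * s1 = 1) (hs1f : ∀ x, s1 x ≠ x)
    (hs2i : s2 * s2 = 1) (hs2f : ∀ x, s2 x ≠ x)
    (hcomm : s0 * s2 = s2 * s0)
    (hs02f : ∀ x, (s0 * s2) x ≠ x)
    (r0 r1 r2 : Equiv.Perm (F × Fin 3))
    (hr0 : ∀ Φ : F, r0 (Φ, 0) = (s1 Φ, 0) ∧ r0 (Φ, 1) = (s0 Φ, 1) ∧ r0 (Φ, 2) = (s1 Φ, 2))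
    (hr1 : ∀ Φ : F, r1 (Φ, 0) = (s2 Φ, 0) ∧ r1 (Φ, 1) = (Φ, 2) ∧ r1 (Φ, 2) = (Φ, 1))
    (hr2 : ∀ Φ : F, r2 (Φ, 0) = (Φ, 2) ∧ r2 (Φ, 1) = (s2 Φ, 1) ∧ r2 (Φ, 2) = (Φ, 0)) :
    ((∀ x, r0 x ≠ x) ∧ r0 * r0 = 1) ∧
    ((∀ x, r1 x ≠ x) ∧ r1 * r1 = 1) ∧
    ((∀ x, r2 x ≠ x) ∧ r2 * r2 = 1) ∧
    r0 * r2 = r2 * r0 ∧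
    ((∀ x, (r0 * r2) x ≠ x) ∧ (r0 * r2) * (r0 * r2) = 1) ∧
    (r1 * r2) ^ 3 = 1 := by
  rw [Perm.mul_self_eq_one_iff_involutive] at hs0i hs1i hs2i
  have h0 : r0 * r0 = 1 := Perm.mul_self_eq_one_iff_involutive.2 (involutive_r0 hr0 hs0i hs1i)
  have h1 : r1 * r1 = 1 := Perm.mul_self_eq_one_iff_involutive.2 (involutive_r1 hr1 hs2i)
  have h2 : r2 * r2 = 1 := Perm.mul_self_eq_one_iff_involutive.2 (involutive_r2 hr2 hs2i)
  have hc : Commute r0 r2 := commute_r0_r2 hr0 hr2 hcomm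
  refine ⟨⟨r0_apply_ne hr0 hs0f hs1f, h0⟩, ⟨r1_apply_ne hr1 hs2f, h1⟩, ⟨r2_apply_ne hr2 hs2f, h2⟩,
    hc.eq, ⟨r0_mul_r2_apply_ne hr0 hr2 hs02f, ?_⟩, r1_mul_r2_pow_three hr1 hr2 hs2i⟩
  rw [← sq, hc.mul_pow, sq, sq, h0, h2, one_mul]

/-- the truncation generators r0, r1, r2 are fixed-point-free involutions,
r0∘r2 = r2∘r0 is also a fixed-point-free involution, and (r1∘r2)^3 = 1. -/
theorem truncation_generators_relations
    {F : Type*} [Fintype F] [Nonempty F]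
    (s0 s1 s2 : Equiv.Perm F)
    (hs0i : s0 * s0 = 1) (hs0f : ∀ x, s0 x ≠ x)
    (hs1i : s1 * s1 = 1) (hs1f : ∀ x, s1 x ≠ x)
    (hs2i : s2 * s2 = 1) (hs2f : ∀ x, s2 x ≠ x)
    (hcomm : s0 * s2 = s2 * s0)
    (hs02i : (s0 * s2) * (s0 * s2) = 1) (hs02f : ∀ x, (s0 * s2) x ≠ x)
    (htrans : ∀ x y : F, ∃ g ∈ Subgroup.closure ({s0, s1, s2} : Set (Equiv.Perm F)), g x = y)
    (r0 r1 r2 : Equiv.Perm (F × Fin 3))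
    (hr0 : ∀ Φ : F, r0 (Φ, 0) = (s1 Φ, 0) ∧ r0 (Φ, 1) = (s0 Φ, 1) ∧ r0 (Φ, 2) = (s1 Φ, 2))
    (hr1 : ∀ Φ : F, r1 (Φ, 0) = (s2 Φ, 0) ∧ r1 (Φ, 1) = (Φ, 2) ∧ r1 (Φ, 2) = (Φ, 1))
    (hr2 : ∀ Φ : F, r2 (Φ, 0) = (Φ, 2) ∧ r2 (Φ, 1) = (s2 Φ, 1) ∧ r2 (Φ, 2) = (Φ, 0)) :
    ((∀ x, r0 x ≠ x) ∧ r0 * r0 = 1) ∧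
    ((∀ x, r1 x ≠ x) ∧ r1 * r1 = 1) ∧
    ((∀ x, r2 x ≠ x) ∧ r2 * r2 = 1) ∧
    r0 * r2 = r2 * r0 ∧
    ((∀ x, (r0 * r2) x ≠ x) ∧ (r0 * r2) * (r0 * r2) = 1) ∧
    (r1 * r2) ^ 3 = 1 :=
  truncation_generators_relations_general s0 s1 s2 hs0i hs0f hs1i hs1f hs2i hs2f hcomm hs02f r0 r1
    r2 hr0 hr1 hr2
end

section
/- Let M be a map with flag set F and generators s0, s1, s2, and let r0, r1, r2 be the truncation generators on F × {0,1,2}. Then the group ⟨r0, r1, r2⟩ acts transitively on F × {0,1,2}. -/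
/-!
Every flag `(Φ, i)` of the truncation is moved to level `0` by `1`, `r2 * r1` or `r2`, without
changing `Φ`. On level `0` the elements `r0`, `r1` and `r2 r1 r0 r1 r2` act as `s1`, `s2` and `s0`
(the last one travels to level `1`, where `r0` acts as `s0`), so all of `Mon(M)` is realized on
level `0` and its transitivity lifts to the truncation.
-/

open Equiv

def Subgroup.realizedAlong {α β : Type*} (H : Subgroup (Perm β)) (e : α → β) :
    Subgroup (Perm α) where
  carrier := {σ | ∃ g ∈ H, ∀ a, g (e a) = e (σ a)}
  one_mem' := ⟨1, H.one_mem, fun _ => rfl⟩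
  mul_mem' := by
    rintro σ τ ⟨g, hg, hgσ⟩ ⟨k, hk, hkτ⟩
    exact ⟨g * k, H.mul_mem hg hk, fun a => by rw [Perm.mul_apply, Perm.mul_apply, hkτ, hgσ]⟩
  inv_mem' := by
    rintro σ ⟨g, hg, hgσ⟩
    refine ⟨g⁻¹, H.inv_mem hg, fun a => ?_⟩
    rw [Perm.inv_eq_iff_eq, hgσ]
    simp

theorem Subgroup.exists_mem_apply_eq_of_realizedAlong {α β : Type*} {H : Subgroup (Perm β)}
    {e : α → β} (hreach : ∀ b, ∃ g ∈ H, ∃ a, g b = e a)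
    (htrans : ∀ a a', ∃ σ ∈ H.realizedAlong e, σ a = a') (b b' : β) :
    ∃ g ∈ H, g b = b' := by
  obtain ⟨g, hg, a, hga⟩ := hreach b
  obtain ⟨g', hg', a', hga'⟩ := hreach b'
  obtain ⟨σ, ⟨k, hk, hkσ⟩, hσ⟩ := htrans a a'
  refine ⟨g'⁻¹ * k * g, H.mul_mem (H.mul_mem (H.inv_mem hg') hk) hg, ?_⟩
  rw [Perm.mul_apply, Perm.mul_apply, Perm.inv_eq_iff_eq, hga, hkσ, hσ, hga']

/-- The second coordinate of a flag of the truncation is its *level*. -/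
structure IsTruncation {F : Type*} (s0 s1 s2 : Perm F) (r0 r1 r2 : Perm (F × Fin 3)) :
    Prop where
  r0_apply : ∀ Φ : F, r0 (Φ, 0) = (s1 Φ, 0) ∧ r0 (Φ, 1) = (s0 Φ, 1) ∧ r0 (Φ, 2) = (s1 Φ, 2)
  r1_apply : ∀ Φ : F, r1 (Φ, 0) = (s2 Φ, 0) ∧ r1 (Φ, 1) = (Φ, 2) ∧ r1 (Φ, 2) = (Φ, 1)
  r2_apply : ∀ Φ : F, r2 (Φ, 0) = (Φ, 2) ∧ r2 (Φ, 1) = (s2 Φ, 1) ∧ r2 (Φ, 2) = (Φ, 0)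

namespace IsTruncation

variable {F : Type*} {s0 s1 s2 : Perm F} {r0 r1 r2 : Perm (F × Fin 3)}

theorem exists_mem_apply_eq_level_zero (h : IsTruncation s0 s1 s2 r0 r1 r2) (Φ : F)
    (i : Fin 3) : ∃ g ∈ Subgroup.closure {r0, r1, r2}, g (Φ, i) = (Φ, 0) := by
  have hr1 : r1 ∈ Subgroup.closure {r0, r1, r2} := Subgroup.subset_closure (by simp)
  have hr2 : r2 ∈ Subgroup.closure {r0, r1, r2} := Subgroup.subset_closure (by simp)
  fin_cases i
  · exact ⟨1, Subgroup.one_mem _, rfl⟩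
  · refine ⟨r2 * r1, Subgroup.mul_mem _ hr2 hr1, ?_⟩
    simp [(h.r1_apply Φ).2.1, (h.r2_apply Φ).2.2]
  · exact ⟨r2, hr2, (h.r2_apply Φ).2.2⟩

theorem closure_le_realizedAlong (h : IsTruncation s0 s1 s2 r0 r1 r2) :
    Subgroup.closure {s0, s1, s2} ≤
      (Subgroup.closure {r0, r1, r2}).realizedAlong (fun Φ : F => (Φ, 0)) := by
  have hr0 : r0 ∈ Subgroup.closure {r0, r1, r2} := Subgroup.subset_closure (by simp)
  have hr1 : r1 ∈ Subgroup.closure {r0, r1, r2} := Subgroup.subset_closure (by simp)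
  have hr2 : r2 ∈ Subgroup.closure {r0, r1, r2} := Subgroup.subset_closure (by simp)
  rw [Subgroup.closure_le, Set.insert_subset_iff, Set.insert_subset_iff,
    Set.singleton_subset_iff]
  refine ⟨?_, ⟨r0, hr0, fun Φ => (h.r0_apply Φ).1⟩, ⟨r1, hr1, fun Φ => (h.r1_apply Φ).1⟩⟩
  refine ⟨r2 * r1 * r0 * r1 * r2, ?_, fun Φ => ?_⟩
  · exact Subgroup.mul_mem _ (Subgroup.mul_mem _ (Subgroup.mul_mem _
      (Subgroup.mul_mem _ hr2 hr1) hr0) hr1) hr2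
  · simp only [Perm.mul_apply]
    rw [(h.r2_apply Φ).1, (h.r1_apply Φ).2.2, (h.r0_apply Φ).2.1, (h.r1_apply (s0 Φ)).2.1,
      (h.r2_apply (s0 Φ)).2.2]

end IsTruncation

theorem truncation_monodromy_transitive_general
    {F : Type*}
    (s0 s1 s2 : Equiv.Perm F)
    (htrans : ∀ x y : F, ∃ g ∈ Subgroup.closure ({s0, s1, s2} : Set (Equiv.Perm F)), g x = y)
    (r0 r1 r2 : Equiv.Perm (F × Fin 3))
    (hr0 : ∀ Φ : F, r0 (Φ, 0) = (s1 Φ, 0) ∧ r0 (Φ, 1) = (s0 Φ, 1) ∧ r0 (Φ, 2) = (s1 Φ, 2))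
    (hr1 : ∀ Φ : F, r1 (Φ, 0) = (s2 Φ, 0) ∧ r1 (Φ, 1) = (Φ, 2) ∧ r1 (Φ, 2) = (Φ, 1))
    (hr2 : ∀ Φ : F, r2 (Φ, 0) = (Φ, 2) ∧ r2 (Φ, 1) = (s2 Φ, 1) ∧ r2 (Φ, 2) = (Φ, 0)) :
    ∀ x y : F × Fin 3,
      ∃ g ∈ Subgroup.closure ({r0, r1, r2} : Set (Equiv.Perm (F × Fin 3))), g x = y := by
  have ht : IsTruncation s0 s1 s2 r0 r1 r2 := ⟨hr0, hr1, hr2⟩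
  refine Subgroup.exists_mem_apply_eq_of_realizedAlong (e := fun Φ : F => (Φ, 0))
    (fun x => ?_) (fun Φ Ψ => ?_)
  · obtain ⟨g, hg, hgx⟩ := ht.exists_mem_apply_eq_level_zero x.1 x.2
    exact ⟨g, hg, x.1, hgx⟩
  · obtain ⟨σ, hσ, rfl⟩ := htrans Φ Ψ
    exact ⟨σ, ht.closure_le_realizedAlong hσ, rfl⟩

/-- the group generated by the truncation generators acts transitively
on F × {0,1,2}. -/
theorem truncation_monodromy_transitive
    {F : Type*} [Fintype F] [Nonempty F]
    (s0 s1 s2 : Equiv.Perm F)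
    (hs0i : s0 * s0 = 1) (hs0f : ∀ x, s0 x ≠ x)
    (hs1i : s1 * s1 = 1) (hs1f : ∀ x, s1 x ≠ x)
    (hs2i : s2 * s2 = 1) (hs2f : ∀ x, s2 x ≠ x)
    (hcomm : s0 * s2 = s2 * s0)
    (hs02i : (s0 * s2) * (s0 * s2) = 1) (hs02f : ∀ x, (s0 * s2) x ≠ x)
    (htrans : ∀ x y : F, ∃ g ∈ Subgroup.closure ({s0, s1, s2} : Set (Equiv.Perm F)), g x = y)
    (r0 r1 r2 : Equiv.Perm (F × Fin 3))
    (hr0 : ∀ Φ : F, r0 (Φ, 0) = (s1 Φ, 0) ∧ r0 (Φ, 1) = (s0 Φ, 1) ∧ r0 (Φ, 2) = (s1 Φ, 2))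
    (hr1 : ∀ Φ : F, r1 (Φ, 0) = (s2 Φ, 0) ∧ r1 (Φ, 1) = (Φ, 2) ∧ r1 (Φ, 2) = (Φ, 1))
    (hr2 : ∀ Φ : F, r2 (Φ, 0) = (Φ, 2) ∧ r2 (Φ, 1) = (s2 Φ, 1) ∧ r2 (Φ, 2) = (Φ, 0)) :
    ∀ x y : F × Fin 3,
      ∃ g ∈ Subgroup.closure ({r0, r1, r2} : Set (Equiv.Perm (F × Fin 3))), g x = y :=
  truncation_monodromy_transitive_general s0 s1 s2 htrans r0 r1 r2 hr0 hr1 hr2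
end

section
/- Let M be a map with flag set F and generators s0, s1, s2, and let r0, r1, r2 be the truncation generators on F × {0,1,2}. Then every orbit of the subgroup ⟨r1, r2⟩ acting on F × {0,1,2} has exactly 6 elements; that is, every vertex of the truncated map Tr(M) has valency 3. -/
/-!
Each of `r₁, r₂` moves a flag `(Φ, i)` of `Tr(M)` to a flag whose `F`-component is `Φ` or `s₂ Φ`, so
the finite set `{Φ, s₂ Φ} × {0,1,2}` is invariant under `⟨r₁, r₂⟩` and contains the orbit of
`(Φ, i)`. Conversely, the alternating walk
`(Φ,0) →r₂ (Φ,2) →r₁ (Φ,1) →r₂ (s₂Φ,1) →r₁ (s₂Φ,2) →r₂ (s₂Φ,0)` visits all six of its points.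
They are distinct because `s₂` has no fixed points.
-/

open Equiv MulAction Set Function
open scoped Pointwise

section OrbitOfClosure

variable {α : Type*} {S : Set (Perm α)}

theorem orbit_closure_subset_of_mapsTo {T : Set α} (hT : T.Finite)
    (hS : ∀ g ∈ S, MapsTo g T T) {x : α} (hx : x ∈ T) :
    orbit (Subgroup.closure S) x ⊆ T := by
  have hle : Subgroup.closure S ≤ stabilizer (Perm α) T :=
    (Subgroup.closure_le _).2 fun g hg => (mem_stabilizer_set' hT).2 (hS g hg)
  rintro _ ⟨g, rfl⟩
  exact (mem_stabilizer_set' hT).1 (hle g.2) hx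

theorem orbit_closure_apply {g : Perm α} (hg : g ∈ S) (x : α) :
    orbit (Subgroup.closure S) (g x) = orbit (Subgroup.closure S) x :=
  orbit_smul (⟨g, Subgroup.subset_closure hg⟩ : Subgroup.closure S) x

end OrbitOfClosure

namespace Truncation

variable {F : Type*}

def vertexSet (s : Perm F) (Φ : F) : Set (F × Fin 3) := {Φ, s Φ} ×ˢ univ

theorem vertexSet_finite (s : Perm F) (Φ : F) : (vertexSet s Φ).Finite :=
  (toFinite _).prod finite_univ

theorem mem_vertexSet {s : Perm F} {Φ : F} (i : Fin 3) : (Φ, i) ∈ vertexSet s Φ := by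
  simp [vertexSet]

theorem card_vertexSet {s : Perm F} {Φ : F} (hΦ : s Φ ≠ Φ) : Nat.card (vertexSet s Φ) = 6 := by
  rw [vertexSet, Nat.card_congr (Equiv.Set.prod _ _), Nat.card_prod, Nat.card_coe_set_eq,
    ncard_pair hΦ.symm, Nat.card_univ, Nat.card_eq_fintype_card, Fintype.card_fin]

theorem mapsTo_vertexSet {s : Perm F} (hs : Involutive s) {g : Perm (F × Fin 3)}
    (hg : ∀ p, (g p).1 = p.1 ∨ (g p).1 = s p.1) (Φ : F) :
    MapsTo g (vertexSet s Φ) (vertexSet s Φ) := by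
  have hpair : MapsTo s {Φ, s Φ} {Φ, s Φ} := by
    rintro _ (rfl | rfl)
    exacts [Or.inr rfl, Or.inl (hs _)]
  rintro p ⟨hp, -⟩
  refine ⟨?_, mem_univ _⟩
  rcases hg p with h | h <;> rw [h]
  exacts [hp, hpair hp]

variable {s2 : Perm F} {r1 r2 : Perm (F × Fin 3)}

theorem r1_apply_fst (hr1 : ∀ Φ : F, r1 (Φ, 0) = (s2 Φ, 0) ∧ r1 (Φ, 1) = (Φ, 2) ∧ r1 (Φ, 2) = (Φ, 1))
    (p : F × Fin 3) : (r1 p).1 = p.1 ∨ (r1 p).1 = s2 p.1 := by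
  obtain ⟨Φ, i⟩ := p
  fin_cases i <;> simp [hr1 Φ]

theorem r2_apply_fst (hr2 : ∀ Φ : F, r2 (Φ, 0) = (Φ, 2) ∧ r2 (Φ, 1) = (s2 Φ, 1) ∧ r2 (Φ, 2) = (Φ, 0))
    (p : F × Fin 3) : (r2 p).1 = p.1 ∨ (r2 p).1 = s2 p.1 := by
  obtain ⟨Φ, i⟩ := p
  fin_cases i <;> simp [hr2 Φ]

theorem vertexSet_subset_orbit
    (hr1 : ∀ Φ : F, r1 (Φ, 0) = (s2 Φ, 0) ∧ r1 (Φ, 1) = (Φ, 2) ∧ r1 (Φ, 2) = (Φ, 1))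
    (hr2 : ∀ Φ : F, r2 (Φ, 0) = (Φ, 2) ∧ r2 (Φ, 1) = (s2 Φ, 1) ∧ r2 (Φ, 2) = (Φ, 0)) (Φ : F) :
    vertexSet s2 Φ ⊆ orbit (Subgroup.closure {r1, r2}) (Φ, 0) := by
  set O := fun p : F × Fin 3 => orbit (Subgroup.closure ({r1, r2} : Set (Perm (F × Fin 3)))) p
  have step1 (p) : O (r1 p) = O p := orbit_closure_apply (by simp) p
  have step2 (p) : O (r2 p) = O p := orbit_closure_apply (by simp) p
  have h2 : O (Φ, 2) = O (Φ, 0) := by rw [← (hr2 Φ).1, step2]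
  have h1 : O (Φ, 1) = O (Φ, 0) := by rw [← (hr1 Φ).2.2, step1, h2]
  have h1' : O (s2 Φ, 1) = O (Φ, 0) := by rw [← (hr2 Φ).2.1, step2, h1]
  have h2' : O (s2 Φ, 2) = O (Φ, 0) := by rw [← (hr1 (s2 Φ)).2.1, step1, h1']
  have h0' : O (s2 Φ, 0) = O (Φ, 0) := by rw [← (hr2 (s2 Φ)).2.2, step2, h2']
  rintro ⟨a, i⟩ ⟨ha, -⟩
  suffices O (a, i) = O (Φ, 0) by change (a, i) ∈ O (Φ, 0); rw [← this]; exact mem_orbit_self _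
  rcases ha with rfl | rfl <;> fin_cases i
  exacts [rfl, h1, h2, h0', h1', h2']

theorem orbit_eq_vertexSet (hs2i : s2 * s2 = 1)
    (hr1 : ∀ Φ : F, r1 (Φ, 0) = (s2 Φ, 0) ∧ r1 (Φ, 1) = (Φ, 2) ∧ r1 (Φ, 2) = (Φ, 1))
    (hr2 : ∀ Φ : F, r2 (Φ, 0) = (Φ, 2) ∧ r2 (Φ, 1) = (s2 Φ, 1) ∧ r2 (Φ, 2) = (Φ, 0))
    (Φ : F) (i : Fin 3) :
    orbit (Subgroup.closure {r1, r2}) (Φ, i) = vertexSet s2 Φ := by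
  have hs2 : Involutive s2 := fun a => Perm.ext_iff.1 hs2i a
  refine (orbit_closure_subset_of_mapsTo (vertexSet_finite s2 Φ) ?_ (mem_vertexSet i)).antisymm ?_
  · rintro g (rfl | rfl)
    exacts [mapsTo_vertexSet hs2 (r1_apply_fst hr1) Φ, mapsTo_vertexSet hs2 (r2_apply_fst hr2) Φ]
  · rw [orbit_eq_iff.2 (vertexSet_subset_orbit hr1 hr2 Φ (mem_vertexSet i))]
    exact vertexSet_subset_orbit hr1 hr2 Φ

end Truncation

theorem truncation_vertex_orbits_card_six_general
    {F : Type*}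
    (s2 : Equiv.Perm F)
    (hs2i : s2 * s2 = 1) (hs2f : ∀ x, s2 x ≠ x)
    (r1 r2 : Equiv.Perm (F × Fin 3))
    (hr1 : ∀ Φ : F, r1 (Φ, 0) = (s2 Φ, 0) ∧ r1 (Φ, 1) = (Φ, 2) ∧ r1 (Φ, 2) = (Φ, 1))
    (hr2 : ∀ Φ : F, r2 (Φ, 0) = (Φ, 2) ∧ r2 (Φ, 1) = (s2 Φ, 1) ∧ r2 (Φ, 2) = (Φ, 0)) :
    ∀ x : F × Fin 3,
      Nat.card (MulAction.orbit (↥(Subgroup.closure ({r1, r2} : Set (Equiv.Perm (F × Fin 3))))) x) = 6 := by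
  rintro ⟨Φ, i⟩
  rw [Truncation.orbit_eq_vertexSet hs2i hr1 hr2 Φ i, Truncation.card_vertexSet (hs2f Φ)]

/-- every orbit of ⟨r1, r2⟩ on F × {0,1,2} has exactly 6 elements,
i.e. every vertex of Tr(M) has valency 3. -/
theorem truncation_vertex_orbits_card_six
    {F : Type*} [Fintype F] [Nonempty F]
    (s0 s1 s2 : Equiv.Perm F)
    (hs0i : s0 * s0 = 1) (hs0f : ∀ x, s0 x ≠ x)
    (hs1i : s1 * s1 = 1) (hs1f : ∀ x, s1 x ≠ x)
    (hs2i : s2 * s2 = 1) (hs2f : ∀ x, s2 x ≠ x)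
    (hcomm : s0 * s2 = s2 * s0)
    (hs02i : (s0 * s2) * (s0 * s2) = 1) (hs02f : ∀ x, (s0 * s2) x ≠ x)
    (htrans : ∀ x y : F, ∃ g ∈ Subgroup.closure ({s0, s1, s2} : Set (Equiv.Perm F)), g x = y)
    (r0 r1 r2 : Equiv.Perm (F × Fin 3))
    (hr0 : ∀ Φ : F, r0 (Φ, 0) = (s1 Φ, 0) ∧ r0 (Φ, 1) = (s0 Φ, 1) ∧ r0 (Φ, 2) = (s1 Φ, 2))
    (hr1 : ∀ Φ : F, r1 (Φ, 0) = (s2 Φ, 0) ∧ r1 (Φ, 1) = (Φ, 2) ∧ r1 (Φ, 2) = (Φ, 1))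
    (hr2 : ∀ Φ : F, r2 (Φ, 0) = (Φ, 2) ∧ r2 (Φ, 1) = (s2 Φ, 1) ∧ r2 (Φ, 2) = (Φ, 0)) :
    ∀ x : F × Fin 3,
      Nat.card (MulAction.orbit (↥(Subgroup.closure ({r1, r2} : Set (Equiv.Perm (F × Fin 3))))) x) = 6 :=
  truncation_vertex_orbits_card_six_general s2 hs2i hs2f r1 r2 hr1 hr2
end

section
/- Let M be a map with flag set F and generators s0, s1, s2, and let r0, r1, r2 be the truncation generators on F × {0,1,2}. Then the number of orbits of ⟨r1, r2⟩ on F × {0,1,2} equals twice the number of orbits of ⟨s0, s2⟩ on F; that is, the truncated map Tr(M) has exactly 2|E(M)| vertices, where |E(M)| is the number of edges of M. -/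
/-!
Every orbit of `⟨s0, s2⟩` is `{Φ, s0 Φ, s2 Φ, s0 s2 Φ}`, of size 4, and every orbit of `⟨r1, r2⟩`
is `{Φ, s2 Φ} × {0, 1, 2}`, of size 6. Counting `F × {0, 1, 2}` by orbits gives
`6 V = 3 |F| = 3 · 4 E`, hence `V = 2 E`.
-/

open Equiv MulAction Subgroup Set Pointwise

theorem MulAction.card_orbitRel_quotient_mul {G α : Type*} [Group G] [MulAction G α] {k : ℕ}
    (hk : k ≠ 0) (h : ∀ x : α, Nat.card (orbit G x) = k) :
    Nat.card (orbitRel.Quotient G α) * k = Nat.card α := by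
  have e : α ≃ orbitRel.Quotient G α × Fin k :=
    (selfEquivSigmaOrbits G α).trans <| sigmaEquivProdOfEquiv fun ω =>
      have := Nat.finite_of_card_ne_zero (h ω.out ▸ hk)
      Finite.equivFinOfCardEq (h ω.out)
  rw [Nat.card_congr e, Nat.card_prod, Nat.card_fin]

namespace Equiv.Perm

variable {X : Type*} {S : Set (Perm X)}

theorem apply_apply_of_mul_self {g : Perm X} (h : g * g = 1) (x : X) : g (g x) = x := by
  simpa using congr($h x)

theorem apply_mem_orbit_closure {g : Perm X} (hg : g ∈ S) {x y : X}
    (hy : y ∈ orbit (closure S) x) : g y ∈ orbit (closure S) x := by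
  rw [← orbit_eq_iff.mpr hy]
  exact ⟨⟨g, subset_closure hg⟩, rfl⟩

theorem orbit_closure_subset (hS : ∀ g ∈ S, g * g = 1) {T : Set X}
    (hT : ∀ g ∈ S, MapsTo g T T) {x : X} (hx : x ∈ T) : orbit (closure S) x ⊆ T := by
  have hstab : closure S ≤ stabilizer (Perm X) T := by
    refine (closure_le _).2 fun g hg => ?_
    exact (hT g hg).image_subset.antisymm fun y hy =>
      ⟨g y, hT g hg hy, apply_apply_of_mul_self (hS g hg) y⟩
  rintro _ ⟨⟨g, hg⟩, rfl⟩
  rw [← mem_stabilizer_iff.1 (hstab hg)]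
  exact smul_mem_smul_set hx

theorem orbit_closure_pair_of_commute {a b : Perm X} (ha : a * a = 1) (hb : b * b = 1)
    (hab : a * b = b * a) (x : X) :
    orbit (closure {a, b}) x = {x, a x, b x, a (b x)} := by
  have hab' : ∀ y, a (b y) = b (a y) := fun y => congr($hab y)
  refine (orbit_closure_subset ?_ ?_ (by simp)).antisymm ?_
  · rintro g (rfl | rfl) <;> assumption
  · rintro g (rfl | rfl) y (rfl | rfl | rfl | rfl) <;>
      simp [apply_apply_of_mul_self ha, apply_apply_of_mul_self hb, hab']
  · have hx : x ∈ orbit (closure {a, b}) x := mem_orbit_self x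
    have hbx := apply_mem_orbit_closure (by simp) hx (g := b)
    simp only [insert_subset_iff, singleton_subset_iff]
    exact ⟨hx, apply_mem_orbit_closure (by simp) hx, hbx, apply_mem_orbit_closure (by simp) hbx⟩

theorem card_orbit_closure_pair_of_commute {a b : Perm X} (ha : a * a = 1) (hb : b * b = 1)
    (hab : a * b = b * a) (ha' : ∀ x, a x ≠ x) (hb' : ∀ x, b x ≠ x) (hab' : ∀ x, (a * b) x ≠ x)
    (x : X) : Nat.card (orbit (closure {a, b}) x) = 4 := by
  rw [orbit_closure_pair_of_commute ha hb hab, Nat.card_coe_set_eq]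
  have hx_ne_abx : x ≠ a (b x) := (hab' x).symm
  have hax_ne_bx : a x ≠ b x := fun h => hab' x (by simp [← h, apply_apply_of_mul_self ha])
  rw [ncard_insert_of_notMem (by simp [(ha' x).symm, (hb' x).symm, hx_ne_abx]),
    ncard_insert_of_notMem (by simp [hax_ne_bx, a.injective.ne (hb' x).symm]),
    ncard_pair (ha' (b x)).symm]

end Equiv.Perm

section Truncation

open Equiv.Perm

variable {F : Type*} {s2 : Perm F} {r1 r2 : Perm (F × Fin 3)}

theorem truncation_r1_mul_self (hs2 : s2 * s2 = 1)
    (hr1 : ∀ Φ : F, r1 (Φ, 0) = (s2 Φ, 0) ∧ r1 (Φ, 1) = (Φ, 2) ∧ r1 (Φ, 2) = (Φ, 1)) :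
    r1 * r1 = 1 := by
  ext ⟨Φ, j⟩ : 1
  fin_cases j <;> simp [hr1, apply_apply_of_mul_self hs2]

theorem truncation_r2_mul_self (hs2 : s2 * s2 = 1)
    (hr2 : ∀ Φ : F, r2 (Φ, 0) = (Φ, 2) ∧ r2 (Φ, 1) = (s2 Φ, 1) ∧ r2 (Φ, 2) = (Φ, 0)) :
    r2 * r2 = 1 := by
  ext ⟨Φ, j⟩ : 1
  fin_cases j <;> simp [hr2, apply_apply_of_mul_self hs2]

theorem orbit_truncation_vertex (hs2 : s2 * s2 = 1)
    (hr1 : ∀ Φ : F, r1 (Φ, 0) = (s2 Φ, 0) ∧ r1 (Φ, 1) = (Φ, 2) ∧ r1 (Φ, 2) = (Φ, 1))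
    (hr2 : ∀ Φ : F, r2 (Φ, 0) = (Φ, 2) ∧ r2 (Φ, 1) = (s2 Φ, 1) ∧ r2 (Φ, 2) = (Φ, 0)) (Φ : F) :
    orbit (closure {r1, r2}) (Φ, (0 : Fin 3)) = {Φ, s2 Φ} ×ˢ univ := by
  refine (orbit_closure_subset ?_ ?_ (by simp)).antisymm ?_
  · rintro g (rfl | rfl)
    exacts [truncation_r1_mul_self hs2 hr1, truncation_r2_mul_self hs2 hr2]
  · rintro g (rfl | rfl) ⟨ψ, j⟩ ⟨hψ | hψ, -⟩ <;> subst hψ <;> fin_cases j <;>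
      simp [hr1, hr2, apply_apply_of_mul_self hs2]
  · set O := orbit (closure {r1, r2}) (Φ, (0 : Fin 3))
    have step1 : ∀ y ∈ O, r1 y ∈ O := fun y => apply_mem_orbit_closure (by simp)
    have step2 : ∀ y ∈ O, r2 y ∈ O := fun y => apply_mem_orbit_closure (by simp)
    -- the walk (Φ,0) → (Φ,2) → (Φ,1) → (s2 Φ,1) → (s2 Φ,2) → (s2 Φ,0) alternates r2 and r1
    have h0 : (Φ, 0) ∈ O := mem_orbit_self _
    have h2 : (Φ, 2) ∈ O := (hr2 Φ).1 ▸ step2 _ h0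
    have h1 : (Φ, 1) ∈ O := (hr1 Φ).2.2 ▸ step1 _ h2
    have h1' : (s2 Φ, 1) ∈ O := (hr2 Φ).2.1 ▸ step2 _ h1
    have h2' : (s2 Φ, 2) ∈ O := (hr1 (s2 Φ)).2.1 ▸ step1 _ h1'
    have h0' : (s2 Φ, 0) ∈ O := (hr2 (s2 Φ)).2.2 ▸ step2 _ h2'
    rintro ⟨ψ, j⟩ ⟨hψ | hψ, -⟩ <;> subst hψ <;> fin_cases j <;> assumption

theorem card_orbit_truncation_vertex (hs2 : s2 * s2 = 1) (hs2' : ∀ Φ, s2 Φ ≠ Φ)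
    (hr1 : ∀ Φ : F, r1 (Φ, 0) = (s2 Φ, 0) ∧ r1 (Φ, 1) = (Φ, 2) ∧ r1 (Φ, 2) = (Φ, 1))
    (hr2 : ∀ Φ : F, r2 (Φ, 0) = (Φ, 2) ∧ r2 (Φ, 1) = (s2 Φ, 1) ∧ r2 (Φ, 2) = (Φ, 0))
    (z : F × Fin 3) : Nat.card (orbit (closure {r1, r2}) z) = 6 := by
  obtain ⟨Φ, j⟩ := z
  have hz : (Φ, j) ∈ orbit (closure {r1, r2}) (Φ, (0 : Fin 3)) := by
    simp [orbit_truncation_vertex hs2 hr1 hr2]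
  rw [orbit_eq_iff.2 hz, orbit_truncation_vertex hs2 hr1 hr2, Nat.card_coe_set_eq, ncard_prod,
    ncard_pair (hs2' Φ).symm, ncard_univ, Nat.card_fin]

end Truncation

theorem truncation_vertex_count_general
    {F : Type*}
    (s0 s2 : Equiv.Perm F)
    (hs0i : s0 * s0 = 1) (hs0f : ∀ x, s0 x ≠ x)
    (hs2i : s2 * s2 = 1) (hs2f : ∀ x, s2 x ≠ x)
    (hcomm : s0 * s2 = s2 * s0)
    (hs02f : ∀ x, (s0 * s2) x ≠ x)
    (r1 r2 : Equiv.Perm (F × Fin 3))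
    (hr1 : ∀ Φ : F, r1 (Φ, 0) = (s2 Φ, 0) ∧ r1 (Φ, 1) = (Φ, 2) ∧ r1 (Φ, 2) = (Φ, 1))
    (hr2 : ∀ Φ : F, r2 (Φ, 0) = (Φ, 2) ∧ r2 (Φ, 1) = (s2 Φ, 1) ∧ r2 (Φ, 2) = (Φ, 0)) :
    Nat.card (MulAction.orbitRel.Quotient (↥(Subgroup.closure ({r1, r2} : Set (Equiv.Perm (F × Fin 3))))) (F × Fin 3)) =
      2 * Nat.card (MulAction.orbitRel.Quotient (↥(Subgroup.closure ({s0, s2} : Set (Equiv.Perm F)))) F) := by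
  have hvertices := card_orbitRel_quotient_mul (by norm_num)
    (card_orbit_truncation_vertex hs2i hs2f hr1 hr2)
  have hedges := card_orbitRel_quotient_mul (by norm_num)
    (Perm.card_orbit_closure_pair_of_commute hs0i hs2i hcomm hs0f hs2f hs02f)
  rw [Nat.card_prod, Nat.card_fin] at hvertices
  omega

/-- the number of vertices of Tr(M) (orbits of ⟨r1,r2⟩ on F × {0,1,2}) equals
twice the number of edges of M (orbits of ⟨s0,s2⟩ on F). -/
theorem truncation_vertex_count
    {F : Type*} [Fintype F] [Nonempty F]
    (s0 s1 s2 : Equiv.Perm F)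
    (hs0i : s0 * s0 = 1) (hs0f : ∀ x, s0 x ≠ x)
    (hs1i : s1 * s1 = 1) (hs1f : ∀ x, s1 x ≠ x)
    (hs2i : s2 * s2 = 1) (hs2f : ∀ x, s2 x ≠ x)
    (hcomm : s0 * s2 = s2 * s0)
    (hs02i : (s0 * s2) * (s0 * s2) = 1) (hs02f : ∀ x, (s0 * s2) x ≠ x)
    (htrans : ∀ x y : F, ∃ g ∈ Subgroup.closure ({s0, s1, s2} : Set (Equiv.Perm F)), g x = y)
    (r0 r1 r2 : Equiv.Perm (F × Fin 3))
    (hr0 : ∀ Φ : F, r0 (Φ, 0) = (s1 Φ, 0) ∧ r0 (Φ, 1) = (s0 Φ, 1) ∧ r0 (Φ, 2) = (s1 Φ, 2))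
    (hr1 : ∀ Φ : F, r1 (Φ, 0) = (s2 Φ, 0) ∧ r1 (Φ, 1) = (Φ, 2) ∧ r1 (Φ, 2) = (Φ, 1))
    (hr2 : ∀ Φ : F, r2 (Φ, 0) = (Φ, 2) ∧ r2 (Φ, 1) = (s2 Φ, 1) ∧ r2 (Φ, 2) = (Φ, 0)) :
    Nat.card (MulAction.orbitRel.Quotient (↥(Subgroup.closure ({r1, r2} : Set (Equiv.Perm (F × Fin 3))))) (F × Fin 3)) =
      2 * Nat.card (MulAction.orbitRel.Quotient (↥(Subgroup.closure ({s0, s2} : Set (Equiv.Perm F)))) F) :=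
  truncation_vertex_count_general s0 s2 hs0i hs0f hs2i hs2f hcomm hs02f r1 r2 hr1 hr2
end

section
/- Let M be a map with flag set F and generators s0, s1, s2, and let r0, r1, r2 be the truncation generators on F × {0,1,2}. Then the number of orbits of ⟨r0, r2⟩ on F × {0,1,2} equals three times the number of orbits of ⟨s0, s2⟩ on F; that is, the truncated map Tr(M) has exactly 3|E(M)| edges, where |E(M)| is the number of edges of M. -/
/-!
Both ⟨s0, s2⟩ on the flags of M and ⟨r0, r2⟩ on the flags of Tr(M) are generated by two
commuting fixed-point-free involutions a, b whose product is again fixed-point-free, so every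
edge is a set {x, a x, b x, a b x} of exactly four flags, and
counting flags gives 4·|E(Tr M)| = |F × {0,1,2}| = 3·|F| = 3·4·|E(M)|.
-/

open Equiv MulAction Subgroup

namespace MulAction

variable {G α : Type*} [Group G] [MulAction G α]

theorem card_eq_card_orbitRel_quotient_mul {n : ℕ} (hn : n ≠ 0)
    (h : ∀ x : α, Nat.card (orbit G x) = n) :
    Nat.card α = Nat.card (orbitRel.Quotient G α) * n := by
  have e (ω : orbitRel.Quotient G α) : orbit G ω.out ≃ Fin n :=
    (Nat.equivFinOfCardPos (h _ ▸ hn)).trans (finCongr (h _))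
  rw [Nat.card_congr ((selfEquivSigmaOrbits G α).trans (sigmaEquivProdOfEquiv e)),
    Nat.card_prod, Nat.card_fin]

theorem orbit_closure_subset {S : Set G} {T : Set α} {x : α} (hx : x ∈ T)
    (hS : ∀ g ∈ S, ∀ y ∈ T, g • y ∈ T) (hS_inv : ∀ g ∈ S, ∀ y ∈ T, g⁻¹ • y ∈ T) :
    orbit (closure S) x ⊆ T := by
  suffices h : ∀ g ∈ closure S, ∀ y ∈ T, g • y ∈ T by
    rintro _ ⟨⟨g, hg⟩, rfl⟩
    exact h g hg x hx
  intro g hg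
  induction hg using closure_induction'' with
  | mem g hg => exact hS g hg
  | inv_mem g hg => exact hS_inv g hg
  | one => simp
  | mul g h _ _ hg hh => exact fun y hy => mul_smul g h y ▸ hg _ (hh y hy)

variable {a b : G}

theorem orbit_closure_pair_of_commute (ha : a * a = 1) (hb : b * b = 1) (hab : Commute a b)
    (x : α) : orbit (closure {a, b}) x = {x, a • x, b • x, a • b • x} := by
  have ha' : a⁻¹ = a := inv_eq_of_mul_eq_one_right ha
  have hb' : b⁻¹ = b := inv_eq_of_mul_eq_one_right hb
  have haa (c : G) : c * a * a = c := by rw [mul_assoc, ha, mul_one]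
  have hT : ∀ g ∈ ({a, b} : Set G), ∀ y ∈ ({x, a • x, b • x, a • b • x} : Set α),
      g • y ∈ ({x, a • x, b • x, a • b • x} : Set α) := by
    rintro g (rfl | rfl) y (rfl | rfl | rfl | rfl) <;>
      simp [smul_smul, ← mul_assoc, ha, hb, haa, hab.eq]
  refine (orbit_closure_subset (x := x) (by simp) hT ?_).antisymm ?_
  · simpa only [Set.forall_mem_insert, Set.mem_singleton_iff, forall_eq, ha', hb'] using hT
  · have hmem : ∀ g ∈ closure ({a, b} : Set G), g • x ∈ orbit (closure {a, b}) x :=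
      fun g hg => ⟨⟨g, hg⟩, rfl⟩
    have ha_mem : a ∈ closure ({a, b} : Set G) := subset_closure (by simp)
    have hb_mem : b ∈ closure ({a, b} : Set G) := subset_closure (by simp)
    rintro y (rfl | rfl | rfl | rfl)
    · exact mem_orbit_self _
    · exact hmem a ha_mem
    · exact hmem b hb_mem
    · exact smul_smul a b x ▸ hmem _ (mul_mem ha_mem hb_mem)

theorem card_orbit_closure_pair_of_commute (ha : a * a = 1) (hb : b * b = 1)
    (hab : Commute a b) (hfa : ∀ x : α, a • x ≠ x) (hfb : ∀ x : α, b • x ≠ x)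
    (hfab : ∀ x : α, (a * b) • x ≠ x) (x : α) : Nat.card (orbit (closure {a, b}) x) = 4 := by
  have hfab' : a • b • x ≠ x := mul_smul a b x ▸ hfab x
  have h₁ : a • x ≠ b • x := fun h => hfab' (by rw [← h, smul_smul, ha, one_smul])
  have h₂ : a • x ≠ a • b • x := fun h => hfb x (smul_left_cancel a h).symm
  rw [orbit_closure_pair_of_commute ha hb hab, Nat.card_coe_set_eq,
    Set.ncard_insert_of_notMem (by simp [(hfa x).symm, (hfb x).symm, hfab'.symm]),
    Set.ncard_insert_of_notMem (by simp [h₁, h₂]), Set.ncard_pair (hfa (b • x)).symm]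

theorem card_eq_card_orbitRel_quotient_closure_pair_mul_four (ha : a * a = 1)
    (hb : b * b = 1) (hab : Commute a b) (hfa : ∀ x : α, a • x ≠ x) (hfb : ∀ x : α, b • x ≠ x)
    (hfab : ∀ x : α, (a * b) • x ≠ x) :
    Nat.card α = Nat.card (orbitRel.Quotient (closure {a, b}) α) * 4 :=
  card_eq_card_orbitRel_quotient_mul four_ne_zero
    (card_orbit_closure_pair_of_commute ha hb hab hfa hfb hfab)

end MulAction

theorem Equiv.Perm.apply_apply_of_mul_self_eq_one {α : Type*} {σ : Perm α} (h : σ * σ = 1)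
    (x : α) : σ (σ x) = x := by
  rw [← Perm.mul_apply, h, Perm.one_apply]

section Truncation

variable {F : Type*} {s0 s1 s2 : Perm F} {r0 r2 : Perm (F × Fin 3)}

theorem truncation_r0_mul_self_eq_one (hs0i : s0 * s0 = 1) (hs1i : s1 * s1 = 1)
    (hr0 : ∀ Φ : F, r0 (Φ, 0) = (s1 Φ, 0) ∧ r0 (Φ, 1) = (s0 Φ, 1) ∧ r0 (Φ, 2) = (s1 Φ, 2)) :
    r0 * r0 = 1 := by
  ext ⟨Φ, i⟩ : 1
  fin_cases i <;> simp [hr0, Perm.apply_apply_of_mul_self_eq_one, hs0i, hs1i]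

theorem truncation_r2_mul_self_eq_one (hs2i : s2 * s2 = 1)
    (hr2 : ∀ Φ : F, r2 (Φ, 0) = (Φ, 2) ∧ r2 (Φ, 1) = (s2 Φ, 1) ∧ r2 (Φ, 2) = (Φ, 0)) :
    r2 * r2 = 1 := by
  ext ⟨Φ, i⟩ : 1
  fin_cases i <;> simp [hr2, Perm.apply_apply_of_mul_self_eq_one, hs2i]

theorem truncation_commute_r0_r2 (hcomm : s0 * s2 = s2 * s0)
    (hr0 : ∀ Φ : F, r0 (Φ, 0) = (s1 Φ, 0) ∧ r0 (Φ, 1) = (s0 Φ, 1) ∧ r0 (Φ, 2) = (s1 Φ, 2))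
    (hr2 : ∀ Φ : F, r2 (Φ, 0) = (Φ, 2) ∧ r2 (Φ, 1) = (s2 Φ, 1) ∧ r2 (Φ, 2) = (Φ, 0)) :
    Commute r0 r2 := by
  ext ⟨Φ, i⟩ : 1
  have hcomm_apply : s0 (s2 Φ) = s2 (s0 Φ) := Perm.ext_iff.mp hcomm Φ
  fin_cases i <;> simp [hr0, hr2, hcomm_apply]

theorem truncation_r0_apply_ne (hs0f : ∀ x, s0 x ≠ x) (hs1f : ∀ x, s1 x ≠ x)
    (hr0 : ∀ Φ : F, r0 (Φ, 0) = (s1 Φ, 0) ∧ r0 (Φ, 1) = (s0 Φ, 1) ∧ r0 (Φ, 2) = (s1 Φ, 2))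
    (y : F × Fin 3) : r0 y ≠ y := by
  obtain ⟨Φ, i⟩ := y
  fin_cases i <;> simp [hr0, hs0f, hs1f]

theorem truncation_r2_apply_ne (hs2f : ∀ x, s2 x ≠ x)
    (hr2 : ∀ Φ : F, r2 (Φ, 0) = (Φ, 2) ∧ r2 (Φ, 1) = (s2 Φ, 1) ∧ r2 (Φ, 2) = (Φ, 0))
    (y : F × Fin 3) : r2 y ≠ y := by
  obtain ⟨Φ, i⟩ := y
  fin_cases i <;> simp [hr2, hs2f]

theorem truncation_r0_mul_r2_apply_ne (hs02f : ∀ x, (s0 * s2) x ≠ x)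
    (hr0 : ∀ Φ : F, r0 (Φ, 0) = (s1 Φ, 0) ∧ r0 (Φ, 1) = (s0 Φ, 1) ∧ r0 (Φ, 2) = (s1 Φ, 2))
    (hr2 : ∀ Φ : F, r2 (Φ, 0) = (Φ, 2) ∧ r2 (Φ, 1) = (s2 Φ, 1) ∧ r2 (Φ, 2) = (Φ, 0))
    (y : F × Fin 3) : (r0 * r2) y ≠ y := by
  obtain ⟨Φ, i⟩ := y
  have hs02f_apply : s0 (s2 Φ) ≠ Φ := hs02f Φ
  fin_cases i <;> simp [hr0, hr2, hs02f_apply]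

end Truncation

theorem truncation_edge_count_general
    {F : Type*}
    (s0 s1 s2 : Equiv.Perm F)
    (hs0i : s0 * s0 = 1) (hs0f : ∀ x, s0 x ≠ x)
    (hs1i : s1 * s1 = 1) (hs1f : ∀ x, s1 x ≠ x)
    (hs2i : s2 * s2 = 1) (hs2f : ∀ x, s2 x ≠ x)
    (hcomm : s0 * s2 = s2 * s0)
    (hs02f : ∀ x, (s0 * s2) x ≠ x)
    (r0 r2 : Equiv.Perm (F × Fin 3))
    (hr0 : ∀ Φ : F, r0 (Φ, 0) = (s1 Φ, 0) ∧ r0 (Φ, 1) = (s0 Φ, 1) ∧ r0 (Φ, 2) = (s1 Φ, 2))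
    (hr2 : ∀ Φ : F, r2 (Φ, 0) = (Φ, 2) ∧ r2 (Φ, 1) = (s2 Φ, 1) ∧ r2 (Φ, 2) = (Φ, 0)) :
    Nat.card (MulAction.orbitRel.Quotient (↥(Subgroup.closure ({r0, r2} : Set (Equiv.Perm (F × Fin 3))))) (F × Fin 3)) =
      3 * Nat.card (MulAction.orbitRel.Quotient (↥(Subgroup.closure ({s0, s2} : Set (Equiv.Perm F)))) F) := by
  have hM := card_eq_card_orbitRel_quotient_closure_pair_mul_four hs0i hs2i hcomm hs0f hs2f hs02f
  have hTr := card_eq_card_orbitRel_quotient_closure_pair_mul_four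
    (truncation_r0_mul_self_eq_one hs0i hs1i hr0) (truncation_r2_mul_self_eq_one hs2i hr2)
    (truncation_commute_r0_r2 hcomm hr0 hr2) (truncation_r0_apply_ne hs0f hs1f hr0)
    (truncation_r2_apply_ne hs2f hr2) (truncation_r0_mul_r2_apply_ne hs02f hr0 hr2)
  have hflags : Nat.card (F × Fin 3) = Nat.card F * 3 := by rw [Nat.card_prod, Nat.card_fin]
  omega

/-- the number of edges of Tr(M) (orbits of ⟨r0,r2⟩ on F × {0,1,2}) equals
three times the number of edges of M (orbits of ⟨s0,s2⟩ on F). -/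
theorem truncation_edge_count
    {F : Type*} [Fintype F] [Nonempty F]
    (s0 s1 s2 : Equiv.Perm F)
    (hs0i : s0 * s0 = 1) (hs0f : ∀ x, s0 x ≠ x)
    (hs1i : s1 * s1 = 1) (hs1f : ∀ x, s1 x ≠ x)
    (hs2i : s2 * s2 = 1) (hs2f : ∀ x, s2 x ≠ x)
    (hcomm : s0 * s2 = s2 * s0)
    (hs02i : (s0 * s2) * (s0 * s2) = 1) (hs02f : ∀ x, (s0 * s2) x ≠ x)
    (htrans : ∀ x y : F, ∃ g ∈ Subgroup.closure ({s0, s1, s2} : Set (Equiv.Perm F)), g x = y)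
    (r0 r1 r2 : Equiv.Perm (F × Fin 3))
    (hr0 : ∀ Φ : F, r0 (Φ, 0) = (s1 Φ, 0) ∧ r0 (Φ, 1) = (s0 Φ, 1) ∧ r0 (Φ, 2) = (s1 Φ, 2))
    (hr1 : ∀ Φ : F, r1 (Φ, 0) = (s2 Φ, 0) ∧ r1 (Φ, 1) = (Φ, 2) ∧ r1 (Φ, 2) = (Φ, 1))
    (hr2 : ∀ Φ : F, r2 (Φ, 0) = (Φ, 2) ∧ r2 (Φ, 1) = (s2 Φ, 1) ∧ r2 (Φ, 2) = (Φ, 0)) :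
    Nat.card (MulAction.orbitRel.Quotient (↥(Subgroup.closure ({r0, r2} : Set (Equiv.Perm (F × Fin 3))))) (F × Fin 3)) =
      3 * Nat.card (MulAction.orbitRel.Quotient (↥(Subgroup.closure ({s0, s2} : Set (Equiv.Perm F)))) F) :=
  truncation_edge_count_general s0 s1 s2 hs0i hs0f hs1i hs1f hs2i hs2f hcomm hs02f r0 r2 hr0 hr2
end

section
/- Let M be a map with flag set F and generators s0, s1, s2, and let r0, r1, r2 be the truncation generators on F × {0,1,2}. Then the number of orbits of ⟨r0, r1⟩ on F × {0,1,2} equals the number of orbits of ⟨s1, s2⟩ on F plus the number of orbits of ⟨s0, s1⟩ on F; that is, the faces of the truncated map Tr(M) are in bijection with the disjoint union of the vertices and the faces of M. -/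
/-!
The generators r0, r1 never move a flag of Tr(M) between layer 0 and layers 1, 2. On layer 0
they act as s1, s2, so its ⟨r0, r1⟩-orbits are the ⟨s1, s2⟩-orbits of M. On layers 1 and 2,
r1 swaps (Φ, 1) with (Φ, 2), while r0 and r1 r0 r1 act on layer 1 as s0 and s1; so these
orbits are the ⟨s0, s1⟩-orbits of M, each doubled across the two layers.
-/

open MulAction Equiv

section Closure

variable {α β : Type*} {S : Set (Perm α)}

theorem apply_eq_of_mem_closure {f : α → β} (hS : ∀ s ∈ S, ∀ x, f (s x) = f x)
    {g : Perm α} (hg : g ∈ Subgroup.closure S) (x : α) : f (g x) = f x := by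
  induction hg using Subgroup.closure_induction generalizing x with
  | mem s hs => exact hS s hs x
  | one => rfl
  | mul g h _ _ ihg ihh => rw [Perm.mul_apply, ihg, ihh]
  | inv g _ ih => simpa using (ih (g⁻¹ x)).symm

theorem exists_mem_apply_eq_of_mem_closure {H : Subgroup (Perm β)} {i : α → β}
    (hS : ∀ s ∈ S, ∃ g ∈ H, ∀ x, g (i x) = i (s x))
    {h : Perm α} (hh : h ∈ Subgroup.closure S) : ∃ g ∈ H, ∀ x, g (i x) = i (h x) := by
  induction hh using Subgroup.closure_induction with
  | mem s hs => exact hS s hs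
  | one => exact ⟨1, H.one_mem, fun _ => rfl⟩
  | mul h k _ _ ihh ihk =>
    obtain ⟨g, hg, hgh⟩ := ihh
    obtain ⟨g', hg', hgk⟩ := ihk
    exact ⟨g * g', H.mul_mem hg hg', fun x => by simp only [Perm.mul_apply, hgk, hgh]⟩
  | inv h _ ih =>
    obtain ⟨g, hg, hgh⟩ := ih
    refine ⟨g⁻¹, H.inv_mem hg, fun x => ?_⟩
    rw [Perm.inv_eq_iff_eq, hgh]
    simp

def orbitQuotientLift (f : α → β) (hS : ∀ s ∈ S, ∀ x, f (s x) = f x) :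
    orbitRel.Quotient (Subgroup.closure S) α → β :=
  Quotient.lift f <| by
    rintro _ b ⟨g, rfl⟩
    exact apply_eq_of_mem_closure hS g.2 b

def orbitQuotientMap {H : Subgroup (Perm β)} (i : α → β)
    (hS : ∀ s ∈ S, ∃ g ∈ H, ∀ x, g (i x) = i (s x)) :
    orbitRel.Quotient (Subgroup.closure S) α → orbitRel.Quotient H β :=
  Quotient.map' i <| by
    rintro _ b ⟨h, rfl⟩
    obtain ⟨g, hg, hgh⟩ := exists_mem_apply_eq_of_mem_closure hS h.2
    exact ⟨⟨g, hg⟩, hgh b⟩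

theorem orbitRel_quotient_mk_apply {H : Subgroup (Perm α)} {g : Perm α} (hg : g ∈ H) (x : α) :
    (⟦g x⟧ : orbitRel.Quotient H α) = ⟦x⟧ :=
  Quotient.sound ⟨⟨g, hg⟩, rfl⟩

abbrev OrbitsOfPair (a b : Perm α) : Type _ := orbitRel.Quotient (Subgroup.closure {a, b}) α

end Closure

section Truncation

variable {F : Type*} {s0 s1 s2 : Perm F} {r0 r1 : Perm (F × Fin 3)}

def truncFlagClass (s0 s1 s2 : Perm F) (x : F × Fin 3) :
    OrbitsOfPair s1 s2 ⊕ OrbitsOfPair s0 s1 :=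
  if x.2 = 0 then .inl ⟦x.1⟧ else .inr ⟦x.1⟧

theorem truncFlagClass_apply_eq
    (hr0 : ∀ Φ : F, r0 (Φ, 0) = (s1 Φ, 0) ∧ r0 (Φ, 1) = (s0 Φ, 1) ∧ r0 (Φ, 2) = (s1 Φ, 2))
    (hr1 : ∀ Φ : F, r1 (Φ, 0) = (s2 Φ, 0) ∧ r1 (Φ, 1) = (Φ, 2) ∧ r1 (Φ, 2) = (Φ, 1))
    (r : Perm (F × Fin 3)) (hr : r ∈ ({r0, r1} : Set _))
    (x : F × Fin 3) : truncFlagClass s0 s1 s2 (r x) = truncFlagClass s0 s1 s2 x := by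
  obtain ⟨Φ, i⟩ := x
  rcases hr with rfl | rfl <;> fin_cases i
  all_goals
    simp [truncFlagClass, hr0, hr1, orbitRel_quotient_mk_apply, Subgroup.mem_closure_of_mem]

theorem exists_mem_closure_apply_layer_zero (h0 : ∀ Φ : F, r0 (Φ, 0) = (s1 Φ, 0))
    (h1 : ∀ Φ : F, r1 (Φ, 0) = (s2 Φ, 0)) :
    ∀ s ∈ ({s1, s2} : Set (Perm F)),
      ∃ g ∈ Subgroup.closure {r0, r1}, ∀ Φ, g (Φ, 0) = (s Φ, 0) := by
  rintro s (rfl | rfl)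
  · exact ⟨r0, Subgroup.mem_closure_of_mem (by simp), h0⟩
  · exact ⟨r1, Subgroup.mem_closure_of_mem (by simp), h1⟩

theorem exists_mem_closure_apply_layer_one (h01 : ∀ Φ : F, r0 (Φ, 1) = (s0 Φ, 1))
    (h02 : ∀ Φ : F, r0 (Φ, 2) = (s1 Φ, 2)) (h11 : ∀ Φ : F, r1 (Φ, 1) = (Φ, 2))
    (h12 : ∀ Φ : F, r1 (Φ, 2) = (Φ, 1)) :
    ∀ s ∈ ({s0, s1} : Set (Perm F)),
      ∃ g ∈ Subgroup.closure {r0, r1}, ∀ Φ, g (Φ, 1) = (s Φ, 1) := by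
  have hr0 : r0 ∈ Subgroup.closure {r0, r1} := Subgroup.mem_closure_of_mem (by simp)
  have hr1 : r1 ∈ Subgroup.closure {r0, r1} := Subgroup.mem_closure_of_mem (by simp)
  rintro s (rfl | rfl)
  · exact ⟨r0, hr0, h01⟩
  · exact ⟨r1 * r0 * r1, mul_mem (mul_mem hr1 hr0) hr1, fun Φ => by
      simp only [Perm.mul_apply, h11, h02, h12]⟩

def truncFacesEquiv
    (hr0 : ∀ Φ : F, r0 (Φ, 0) = (s1 Φ, 0) ∧ r0 (Φ, 1) = (s0 Φ, 1) ∧ r0 (Φ, 2) = (s1 Φ, 2))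
    (hr1 : ∀ Φ : F, r1 (Φ, 0) = (s2 Φ, 0) ∧ r1 (Φ, 1) = (Φ, 2) ∧ r1 (Φ, 2) = (Φ, 1)) :
    OrbitsOfPair r0 r1 ≃ OrbitsOfPair s1 s2 ⊕ OrbitsOfPair s0 s1 where
  toFun := orbitQuotientLift (truncFlagClass s0 s1 s2) (truncFlagClass_apply_eq hr0 hr1)
  invFun := Sum.elim
    (orbitQuotientMap (·, 0) <| exists_mem_closure_apply_layer_zero (hr0 · |>.1) (hr1 · |>.1))
    (orbitQuotientMap (·, 1) <| exists_mem_closure_apply_layer_one (hr0 · |>.2.1)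
      (hr0 · |>.2.2) (hr1 · |>.2.1) (hr1 · |>.2.2))
  left_inv := by
    rintro ⟨Φ, i⟩
    fin_cases i
    · rfl
    · rfl
    · exact Quotient.sound ⟨⟨r1, Subgroup.mem_closure_of_mem (by simp)⟩, (hr1 Φ).2.2⟩
  right_inv := by
    rintro (q | q) <;> induction q using Quotient.ind <;> rfl

end Truncation

theorem truncation_face_count_general
    {F : Type*} [Fintype F]
    (s0 s1 s2 : Equiv.Perm F)
    (r0 r1 : Equiv.Perm (F × Fin 3))
    (hr0 : ∀ Φ : F, r0 (Φ, 0) = (s1 Φ, 0) ∧ r0 (Φ, 1) = (s0 Φ, 1) ∧ r0 (Φ, 2) = (s1 Φ, 2))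
    (hr1 : ∀ Φ : F, r1 (Φ, 0) = (s2 Φ, 0) ∧ r1 (Φ, 1) = (Φ, 2) ∧ r1 (Φ, 2) = (Φ, 1)) :
    Nat.card (MulAction.orbitRel.Quotient (↥(Subgroup.closure ({r0, r1} : Set (Equiv.Perm (F × Fin 3))))) (F × Fin 3)) =
      Nat.card (MulAction.orbitRel.Quotient (↥(Subgroup.closure ({s1, s2} : Set (Equiv.Perm F)))) F) +
      Nat.card (MulAction.orbitRel.Quotient (↥(Subgroup.closure ({s0, s1} : Set (Equiv.Perm F)))) F) :=
  (Nat.card_congr (truncFacesEquiv hr0 hr1)).trans Nat.card_sum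

/-- the number of faces of Tr(M) (orbits of ⟨r0,r1⟩ on F × {0,1,2}) equals
the number of vertices of M (orbits of ⟨s1,s2⟩) plus the number of faces of M
(orbits of ⟨s0,s1⟩). -/
theorem truncation_face_count
    {F : Type*} [Fintype F] [Nonempty F]
    (s0 s1 s2 : Equiv.Perm F)
    (hs0i : s0 * s0 = 1) (hs0f : ∀ x, s0 x ≠ x)
    (hs1i : s1 * s1 = 1) (hs1f : ∀ x, s1 x ≠ x)
    (hs2i : s2 * s2 = 1) (hs2f : ∀ x, s2 x ≠ x)
    (hcomm : s0 * s2 = s2 * s0)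
    (hs02i : (s0 * s2) * (s0 * s2) = 1) (hs02f : ∀ x, (s0 * s2) x ≠ x)
    (htrans : ∀ x y : F, ∃ g ∈ Subgroup.closure ({s0, s1, s2} : Set (Equiv.Perm F)), g x = y)
    (r0 r1 r2 : Equiv.Perm (F × Fin 3))
    (hr0 : ∀ Φ : F, r0 (Φ, 0) = (s1 Φ, 0) ∧ r0 (Φ, 1) = (s0 Φ, 1) ∧ r0 (Φ, 2) = (s1 Φ, 2))
    (hr1 : ∀ Φ : F, r1 (Φ, 0) = (s2 Φ, 0) ∧ r1 (Φ, 1) = (Φ, 2) ∧ r1 (Φ, 2) = (Φ, 1))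
    (hr2 : ∀ Φ : F, r2 (Φ, 0) = (Φ, 2) ∧ r2 (Φ, 1) = (s2 Φ, 1) ∧ r2 (Φ, 2) = (Φ, 0)) :
    Nat.card (MulAction.orbitRel.Quotient (↥(Subgroup.closure ({r0, r1} : Set (Equiv.Perm (F × Fin 3))))) (F × Fin 3)) =
      Nat.card (MulAction.orbitRel.Quotient (↥(Subgroup.closure ({s1, s2} : Set (Equiv.Perm F)))) F) +
      Nat.card (MulAction.orbitRel.Quotient (↥(Subgroup.closure ({s0, s1} : Set (Equiv.Perm F)))) F) :=
  truncation_face_count_general s0 s1 s2 r0 r1 hr0 hr1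
end

section
/- Let M be a map with flag set F and generators s0, s1, s2, and let r0, r1, r2 be the truncation generators on F × {0,1,2}. For every automorphism γ of M, the permutation of F × {0,1,2} given by (Φ,i) ↦ (γΦ, i) commutes with each of r0, r1, r2, i.e. is an automorphism of Tr(M); moreover the resulting assignment is an injective group homomorphism from Γ(M) into Γ(Tr(M)). -/
/-!
Each truncation generator `rᵢ` acts fibrewise over the layer index in `Fin 3`: it moves a layer to
another one independently of the flag, and inside the layer it acts by one of `s0`, `s1`, `s2` or
the identity. Hence `γ × id` commutes with `rᵢ` as soon as `γ` commutes with `s0`, `s1`, `s2`.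
-/

namespace Equiv.Perm

variable {α : Type*} (β : Type*)

def prodReflHom : Perm α →* Perm (α × β) where
  toFun γ := prodCongr γ (Equiv.refl β)
  map_one' := rfl
  map_mul' _ _ := rfl

variable {β}

@[simp]
theorem prodReflHom_apply (γ : Perm α) (p : α × β) : prodReflHom β γ p = (γ p.1, p.2) := rfl

theorem prodReflHom_injective [Nonempty β] : Function.Injective (prodReflHom (α := α) β) := by
  intro γ δ h
  ext x
  inhabit β
  exact congr_arg Prod.fst (DFunLike.congr_fun h (x, default))

theorem commute_prodReflHom_of_apply_eq {γ : Perm α} {r : Perm (α × β)} (σ : β → Perm α)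
    (τ : β → β) (hr : ∀ x i, r (x, i) = (σ i x, τ i)) (hσ : ∀ i, Commute (σ i) γ) :
    Commute r (prodReflHom β γ) := by
  refine Equiv.ext fun ⟨x, i⟩ => ?_
  rw [mul_apply, mul_apply, prodReflHom_apply, hr, hr, prodReflHom_apply, ← mul_apply, (hσ i).eq,
    mul_apply]

end Equiv.Perm

theorem truncation_automorphism_embedding_general
    {F : Type*}
    (s0 s1 s2 : Equiv.Perm F)
    (r0 r1 r2 : Equiv.Perm (F × Fin 3))
    (hr0 : ∀ Φ : F, r0 (Φ, 0) = (s1 Φ, 0) ∧ r0 (Φ, 1) = (s0 Φ, 1) ∧ r0 (Φ, 2) = (s1 Φ, 2))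
    (hr1 : ∀ Φ : F, r1 (Φ, 0) = (s2 Φ, 0) ∧ r1 (Φ, 1) = (Φ, 2) ∧ r1 (Φ, 2) = (Φ, 1))
    (hr2 : ∀ Φ : F, r2 (Φ, 0) = (Φ, 2) ∧ r2 (Φ, 1) = (s2 Φ, 1) ∧ r2 (Φ, 2) = (Φ, 0)) :
    (∀ γ ∈ Subgroup.centralizer ({s0, s1, s2} : Set (Equiv.Perm F)),
      Equiv.prodCongr γ (Equiv.refl (Fin 3)) ∈
        Subgroup.centralizer ({r0, r1, r2} : Set (Equiv.Perm (F × Fin 3)))) ∧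
    ∃ f : ↥(Subgroup.centralizer ({s0, s1, s2} : Set (Equiv.Perm F))) →*
          ↥(Subgroup.centralizer ({r0, r1, r2} : Set (Equiv.Perm (F × Fin 3)))),
      Function.Injective f ∧
      ∀ γ : ↥(Subgroup.centralizer ({s0, s1, s2} : Set (Equiv.Perm F))),
        ∀ p : F × Fin 3, ((f γ : Equiv.Perm (F × Fin 3)) p) = ((γ : Equiv.Perm F) p.1, p.2) := by
  open Equiv.Perm in
  have hmaps : ∀ γ ∈ Subgroup.centralizer ({s0, s1, s2} : Set (Equiv.Perm F)),
      prodReflHom (Fin 3) γ ∈ Subgroup.centralizer ({r0, r1, r2} : Set (Equiv.Perm (F × Fin 3))) := by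
    intro γ hγ
    have hσ : ∀ σ ∈ ({1, s0, s1, s2} : Set (Equiv.Perm F)), Commute σ γ := by
      rintro σ (rfl | hs)
      exacts [Commute.one_left γ, Subgroup.mem_centralizer_iff.mp hγ σ hs]
    rw [Subgroup.mem_centralizer_iff]
    rintro r (rfl | rfl | rfl)
    · refine commute_prodReflHom_of_apply_eq ![s1, s0, s1] id (fun x i => ?_) fun i => hσ _ ?_
      · fin_cases i <;> simp [hr0]
      · fin_cases i <;> simp
    · refine commute_prodReflHom_of_apply_eq ![s2, 1, 1] ![0, 2, 1] (fun x i => ?_) fun i => hσ _ ?_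
      · fin_cases i <;> simp [hr1]
      · fin_cases i <;> simp
    · refine commute_prodReflHom_of_apply_eq ![1, s2, 1] ![2, 1, 0] (fun x i => ?_) fun i => hσ _ ?_
      · fin_cases i <;> simp [hr2]
      · fin_cases i <;> simp
  exact ⟨hmaps, (prodReflHom (Fin 3)).restrict hmaps,
    MonoidHom.restrict_injective hmaps prodReflHom_injective, fun _ _ => rfl⟩

/-- every automorphism γ of M induces the automorphism (Φ,i) ↦ (γΦ,i) of Tr(M),
and this assignment is an injective group homomorphism Γ(M) → Γ(Tr(M)). -/
theorem truncation_automorphism_embedding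
    {F : Type*} [Fintype F] [Nonempty F]
    (s0 s1 s2 : Equiv.Perm F)
    (hs0i : s0 * s0 = 1) (hs0f : ∀ x, s0 x ≠ x)
    (hs1i : s1 * s1 = 1) (hs1f : ∀ x, s1 x ≠ x)
    (hs2i : s2 * s2 = 1) (hs2f : ∀ x, s2 x ≠ x)
    (hcomm : s0 * s2 = s2 * s0)
    (hs02i : (s0 * s2) * (s0 * s2) = 1) (hs02f : ∀ x, (s0 * s2) x ≠ x)
    (htrans : ∀ x y : F, ∃ g ∈ Subgroup.closure ({s0, s1, s2} : Set (Equiv.Perm F)), g x = y)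
    (r0 r1 r2 : Equiv.Perm (F × Fin 3))
    (hr0 : ∀ Φ : F, r0 (Φ, 0) = (s1 Φ, 0) ∧ r0 (Φ, 1) = (s0 Φ, 1) ∧ r0 (Φ, 2) = (s1 Φ, 2))
    (hr1 : ∀ Φ : F, r1 (Φ, 0) = (s2 Φ, 0) ∧ r1 (Φ, 1) = (Φ, 2) ∧ r1 (Φ, 2) = (Φ, 1))
    (hr2 : ∀ Φ : F, r2 (Φ, 0) = (Φ, 2) ∧ r2 (Φ, 1) = (s2 Φ, 1) ∧ r2 (Φ, 2) = (Φ, 0)) :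
    (∀ γ ∈ Subgroup.centralizer ({s0, s1, s2} : Set (Equiv.Perm F)),
      Equiv.prodCongr γ (Equiv.refl (Fin 3)) ∈
        Subgroup.centralizer ({r0, r1, r2} : Set (Equiv.Perm (F × Fin 3)))) ∧
    ∃ f : ↥(Subgroup.centralizer ({s0, s1, s2} : Set (Equiv.Perm F))) →*
          ↥(Subgroup.centralizer ({r0, r1, r2} : Set (Equiv.Perm (F × Fin 3)))),
      Function.Injective f ∧
      ∀ γ : ↥(Subgroup.centralizer ({s0, s1, s2} : Set (Equiv.Perm F))),
        ∀ p : F × Fin 3, ((f γ : Equiv.Perm (F × Fin 3)) p) = ((γ : Equiv.Perm F) p.1, p.2) :=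
  truncation_automorphism_embedding_general s0 s1 s2 r0 r1 r2 hr0 hr1 hr2
end

section
/- Let M be a map with flag set F and generators s0, s1, s2, and let r0, r1, r2 be the truncation generators on F × {0,1,2}. If M is a k-orbit map, then the number n of orbits of Γ(Tr(M)) on F × {0,1,2} satisfies: n = k, or n = 3k, or k is even and 2n = 3k (i.e. n = 3k/2). -/
/-!
Since the monodromy groups of `M` and of `Tr(M)` are transitive, both automorphism groups act
freely on flags, so the number of flag orbits is the number of flags divided by the order of the
group. The generators of `Tr(M)` permute the three flag types, so an automorphism of `Tr(M)` that
preserves the type of one flag preserves the type of every flag. The type-preserving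
automorphisms form a subgroup `K` of index at most `3`, and `K ≅ Γ(M)` by restriction to the
flags of type `0`. Hence `n · [Γ(Tr M) : K] = 3|F| / |Γ(M)| = 3k` with `[Γ(Tr M) : K] ∈ {1, 2, 3}`.
-/

open MulAction Equiv Function

theorem card_orbitRel_quotient_mul_card {G X : Type*} [Group G] [MulAction G X]
    [IsCancelSMul G X] :
    Nat.card (orbitRel.Quotient G X) * Nat.card G = Nat.card X := by
  rw [← Nat.card_prod]
  exact (Nat.card_congr (selfEquivOrbitsQuotientProd IsCancelSMul.stabilizer_eq_bot)).symm

namespace Equiv.Perm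

variable {X : Type*}

theorem apply_comm_of_mem_centralizer {S : Set (Perm X)} {g w : Perm X}
    (hg : g ∈ Subgroup.centralizer S) (hw : w ∈ Subgroup.closure S) (x : X) :
    w (g x) = g (w x) := by
  rw [← Subgroup.centralizer_closure] at hg
  exact congrFun (congrArg DFunLike.coe (Subgroup.mem_centralizer_iff.mp hg w hw)) x

theorem mem_centralizer_triple_iff {a b c g : Perm X} :
    g ∈ Subgroup.centralizer {a, b, c} ↔
      (∀ x, a (g x) = g (a x)) ∧ (∀ x, b (g x) = g (b x)) ∧ (∀ x, c (g x) = g (c x)) := by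
  simp only [Subgroup.mem_centralizer_iff, Set.forall_mem_insert, Set.mem_singleton_iff, forall_eq]
  simp only [Perm.ext_iff, Perm.mul_apply]

theorem isCancelSMul_centralizer {S : Set (Perm X)}
    (htrans : ∀ x y : X, ∃ w ∈ Subgroup.closure S, w x = y) :
    IsCancelSMul (Subgroup.centralizer S) X := by
  refine isCancelSMul_iff_eq_one_of_smul_eq.mpr fun g x hx ↦ Subtype.ext <| Perm.ext fun y ↦ ?_
  obtain ⟨w, hw, rfl⟩ := htrans x y
  rw [← apply_comm_of_mem_centralizer g.2 hw]
  exact congrArg w hx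

theorem exists_mem_closure_semiconj {Y : Type*} {S : Set (Perm X)} {R : Set (Perm Y)}
    (e : X → Y) (h : ∀ s ∈ S, ∃ w ∈ Subgroup.closure R, Semiconj e s w)
    {g : Perm X} (hg : g ∈ Subgroup.closure S) :
    ∃ w ∈ Subgroup.closure R, Semiconj e g w := by
  induction hg using Subgroup.closure_induction with
  | mem s hs => exact h s hs
  | one => exact ⟨1, one_mem _, Semiconj.id_right⟩
  | mul a b _ _ iha ihb =>
    obtain ⟨wa, hwa, ha⟩ := iha
    obtain ⟨wb, hwb, hb⟩ := ihb
    exact ⟨wa * wb, mul_mem hwa hwb, ha.comp_right hb⟩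
  | inv a _ iha =>
    obtain ⟨w, hw, ha⟩ := iha
    exact ⟨w⁻¹, inv_mem hw, ha.inverses_right a.apply_symm_apply w.symm_apply_apply⟩

def sndFiber {α β : Type*} (σ : Perm (α × β)) (hσ : ∀ p, (σ p).2 = p.2) (b : β) :
    Perm α where
  toFun a := (σ (a, b)).1
  invFun a := (σ⁻¹ (a, b)).1
  left_inv a := by
    have h : ((σ (a, b)).1, b) = σ (a, b) := Prod.ext rfl (hσ (a, b)).symm
    simp [h]
  right_inv a := by
    have h : ((σ⁻¹ (a, b)).1, b) = σ⁻¹ (a, b) :=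
      Prod.ext rfl (by simpa using hσ (σ⁻¹ (a, b)))
    show (σ ((σ⁻¹ (a, b)).1, b)).1 = a
    rw [h]
    simp

theorem apply_eq_sndFiber {α β : Type*} (σ : Perm (α × β)) (hσ : ∀ p, (σ p).2 = p.2)
    (a : α) (b : β) : σ (a, b) = (σ.sndFiber hσ b a, b) :=
  Prod.ext rfl (hσ _)

variable {T : Type*}

def fiberPermuting (t : X → T) : Subgroup (Perm X) where
  carrier := {w | ∃ π : Perm T, Semiconj t w π}
  mul_mem' := by
    rintro a b ⟨πa, ha⟩ ⟨πb, hb⟩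
    exact ⟨πa * πb, ha.comp_right hb⟩
  one_mem' := ⟨1, Semiconj.id_right⟩
  inv_mem' := by
    rintro a ⟨π, ha⟩
    exact ⟨π⁻¹, ha.inverses_right a.apply_symm_apply π.symm_apply_apply⟩

end Equiv.Perm

section FiberPreserving

variable (G : Type*) {X T : Type*} [Group G] [MulAction G X]

def fiberPreserving (t : X → T) : Subgroup G where
  carrier := {g | ∀ x, t (g • x) = t x}
  mul_mem' := by
    intro a b ha hb x
    rw [mul_smul, ha, hb]
  one_mem' := by simp
  inv_mem' := by
    intro a ha x
    rw [← ha (a⁻¹ • x), smul_inv_smul]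

variable {G}

/-- The coset `g • fiberPreserving G t` is determined by `t (g⁻¹ • x₀)`. -/
theorem index_fiberPreserving_le [Finite T] {t : X → T} (x₀ : X)
    (h : ∀ (g : G) x, t (g • x) = t x → g ∈ fiberPreserving G t) :
    (fiberPreserving G t).index ≤ Nat.card T := by
  rw [Subgroup.index_eq_card]
  let f : G ⧸ fiberPreserving G t → T := Quotient.lift (fun g ↦ t (g⁻¹ • x₀)) fun a b hab ↦ by
    rw [← inv_mem (QuotientGroup.leftRel_apply.mp hab) (a⁻¹ • x₀), smul_smul, mul_inv_rev,
      inv_inv, mul_inv_cancel_right]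
  refine Nat.card_le_card_of_injective f fun p q hpq ↦ ?_
  induction p using QuotientGroup.induction_on with | H p
  induction q using QuotientGroup.induction_on with | H q
  refine QuotientGroup.eq.mpr (h _ (q⁻¹ • x₀) ?_)
  rw [mul_smul, smul_inv_smul]
  exact hpq

end FiberPreserving

/-- A fibre-permuting monodromy element `w` commutes with `g`, so `g` preserves the fibre of `w x`
as soon as it preserves the fibre of `x`. -/
theorem mem_fiberPreserving_centralizer {X T : Type*} {S : Set (Perm X)} {t : X → T}
    (hS : Subgroup.closure S ≤ Perm.fiberPermuting t)
    (htrans : ∀ x y : X, ∃ w ∈ Subgroup.closure S, w x = y)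
    {g : Subgroup.centralizer S} {x : X} (hx : t (g • x) = t x) :
    g ∈ fiberPreserving (Subgroup.centralizer S) t := by
  intro y
  obtain ⟨w, hw, rfl⟩ := htrans x y
  obtain ⟨π, hπ⟩ := hS hw
  rw [Subgroup.smul_def, Perm.smul_def, ← Perm.apply_comm_of_mem_centralizer g.2 hw, hπ.eq,
    hπ.eq]
  exact congrArg π hx

structure IsTruncation_s10 {F : Type*} (s0 s1 s2 : Perm F) (r0 r1 r2 : Perm (F × Fin 3)) :
    Prop where
  r0_zero : ∀ Φ, r0 (Φ, 0) = (s1 Φ, 0)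
  r0_one : ∀ Φ, r0 (Φ, 1) = (s0 Φ, 1)
  r0_two : ∀ Φ, r0 (Φ, 2) = (s1 Φ, 2)
  r1_zero : ∀ Φ, r1 (Φ, 0) = (s2 Φ, 0)
  r1_one : ∀ Φ, r1 (Φ, 1) = (Φ, 2)
  r1_two : ∀ Φ, r1 (Φ, 2) = (Φ, 1)
  r2_zero : ∀ Φ, r2 (Φ, 0) = (Φ, 2)
  r2_one : ∀ Φ, r2 (Φ, 1) = (s2 Φ, 1)
  r2_two : ∀ Φ, r2 (Φ, 2) = (Φ, 0)

namespace IsTruncation_s10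

variable {F : Type*} {s0 s1 s2 : Perm F} {r0 r1 r2 : Perm (F × Fin 3)}

theorem closure_le_fiberPermuting (h : IsTruncation_s10 s0 s1 s2 r0 r1 r2) :
    Subgroup.closure {r0, r1, r2} ≤ Perm.fiberPermuting (Prod.snd : F × Fin 3 → Fin 3) := by
  rw [Subgroup.closure_le]
  rintro r (rfl | rfl | rfl)
  · refine ⟨1, ?_⟩
    rintro ⟨Φ, i⟩
    fin_cases i <;> simp [h.r0_zero, h.r0_one, h.r0_two]
  · refine ⟨swap 1 2, ?_⟩
    rintro ⟨Φ, i⟩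
    fin_cases i <;> simp [h.r1_zero, h.r1_one, h.r1_two, swap_apply_of_ne_of_ne]
  · refine ⟨swap 0 2, ?_⟩
    rintro ⟨Φ, i⟩
    fin_cases i <;> simp [h.r2_zero, h.r2_one, h.r2_two, swap_apply_of_ne_of_ne]

theorem exists_mem_closure_semiconj (h : IsTruncation_s10 s0 s1 s2 r0 r1 r2) {g : Perm F}
    (hg : g ∈ Subgroup.closure {s0, s1, s2}) :
    ∃ w ∈ Subgroup.closure {r0, r1, r2}, Semiconj (fun Φ ↦ (Φ, (0 : Fin 3))) g w := by
  have hr0 : r0 ∈ Subgroup.closure {r0, r1, r2} := Subgroup.subset_closure (by simp)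
  have hr1 : r1 ∈ Subgroup.closure {r0, r1, r2} := Subgroup.subset_closure (by simp)
  have hr2 : r2 ∈ Subgroup.closure {r0, r1, r2} := Subgroup.subset_closure (by simp)
  refine Perm.exists_mem_closure_semiconj _ ?_ hg
  rintro s (rfl | rfl | rfl)
  · -- the flag `(Φ, 0)` travels through types `2, 1, 1, 2` back to `(s0 Φ, 0)`
    refine ⟨r2 * r1 * r0 * r1 * r2, mul_mem (mul_mem (mul_mem (mul_mem hr2 hr1) hr0) hr1) hr2,
      fun Φ ↦ ?_⟩
    simp [h.r2_zero, h.r1_two, h.r0_one, h.r1_one, h.r2_two]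
  · exact ⟨r0, hr0, fun Φ ↦ (h.r0_zero Φ).symm⟩
  · exact ⟨r1, hr1, fun Φ ↦ (h.r1_zero Φ).symm⟩

theorem exists_mem_closure_apply_eq (h : IsTruncation_s10 s0 s1 s2 r0 r1 r2)
    (htrans : ∀ x y : F, ∃ g ∈ Subgroup.closure {s0, s1, s2}, g x = y) (p q : F × Fin 3) :
    ∃ w ∈ Subgroup.closure {r0, r1, r2}, w p = q := by
  have to_zero (p : F × Fin 3) : ∃ w ∈ Subgroup.closure {r0, r1, r2}, w p = (p.1, 0) := by
    have hr1 : r1 ∈ Subgroup.closure {r0, r1, r2} := Subgroup.subset_closure (by simp)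
    have hr2 : r2 ∈ Subgroup.closure {r0, r1, r2} := Subgroup.subset_closure (by simp)
    obtain ⟨Φ, i⟩ := p
    fin_cases i
    · exact ⟨1, one_mem _, rfl⟩
    · exact ⟨r2 * r1, mul_mem hr2 hr1, by simp [h.r1_one, h.r2_two]⟩
    · exact ⟨r2, hr2, h.r2_two Φ⟩
  obtain ⟨wp, hwp, hp⟩ := to_zero p
  obtain ⟨wq, hwq, hq⟩ := to_zero q
  obtain ⟨g, hg, hgpq⟩ := htrans p.1 q.1
  obtain ⟨w, hw, hwg⟩ := h.exists_mem_closure_semiconj hg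
  refine ⟨wq⁻¹ * w * wp, mul_mem (mul_mem (inv_mem hwq) hw) hwp, ?_⟩
  rw [Perm.mul_apply, Perm.mul_apply, hp, ← hwg.eq, hgpq, Perm.inv_eq_iff_eq, hq]

theorem prodCongr_mem_centralizer (h : IsTruncation_s10 s0 s1 s2 r0 r1 r2) {γ : Perm F}
    (hγ : γ ∈ Subgroup.centralizer {s0, s1, s2}) :
    prodCongr γ (Equiv.refl (Fin 3)) ∈ Subgroup.centralizer {r0, r1, r2} := by
  obtain ⟨h0, h1, h2⟩ := Perm.mem_centralizer_triple_iff.mp hγ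
  refine Perm.mem_centralizer_triple_iff.mpr ⟨?_, ?_, ?_⟩ <;>
  · rintro ⟨Φ, i⟩
    fin_cases i <;> simp [h.r0_zero, h.r0_one, h.r0_two, h.r1_zero, h.r1_one, h.r1_two,
      h.r2_zero, h.r2_one, h.r2_two, h0, h1, h2]

theorem exists_prodCongr_eq (h : IsTruncation_s10 s0 s1 s2 r0 r1 r2) {g : Perm (F × Fin 3)}
    (hg : g ∈ Subgroup.centralizer {r0, r1, r2}) (hsnd : ∀ p, (g p).2 = p.2) :
    ∃ γ ∈ Subgroup.centralizer {s0, s1, s2}, prodCongr γ (Equiv.refl (Fin 3)) = g := by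
  obtain ⟨h0, h1, h2⟩ := Perm.mem_centralizer_triple_iff.mp hg
  set γ := g.sndFiber hsnd 0
  have g_zero (Φ : F) : g (Φ, 0) = (γ Φ, 0) := g.apply_eq_sndFiber hsnd Φ 0
  have g_two (Φ : F) : g (Φ, 2) = (γ Φ, 2) := by
    rw [← h.r2_zero, ← h2, g_zero, h.r2_zero]
  have g_one (Φ : F) : g (Φ, 1) = (γ Φ, 1) := by
    rw [← h.r1_two, ← h1, g_two, h.r1_two]
  refine ⟨γ, Perm.mem_centralizer_triple_iff.mpr ⟨fun Φ ↦ ?_, fun Φ ↦ ?_, fun Φ ↦ ?_⟩, ?_⟩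
  · simpa [g_one, h.r0_one] using h0 (Φ, 1)
  · simpa [g_zero, h.r0_zero] using h0 (Φ, 0)
  · simpa [g_zero, h.r1_zero] using h1 (Φ, 0)
  · ext ⟨Φ, i⟩ : 1
    fin_cases i <;> simp [g_zero, g_one, g_two]

theorem card_fiberPreserving_centralizer (h : IsTruncation_s10 s0 s1 s2 r0 r1 r2) :
    Nat.card (fiberPreserving (Subgroup.centralizer {r0, r1, r2})
      (Prod.snd : F × Fin 3 → Fin 3)) = Nat.card (Subgroup.centralizer {s0, s1, s2}) := by
  symm
  refine Nat.card_eq_of_bijective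
    (fun γ ↦ ⟨⟨prodCongr γ (Equiv.refl _), h.prodCongr_mem_centralizer γ.2⟩, fun _ ↦ rfl⟩)
    ⟨?_, ?_⟩
  · intro γ γ' hγ
    ext Φ
    simpa using congrArg (fun g ↦ (g.1.1 (Φ, 0)).1) hγ
  · rintro ⟨⟨g, hg⟩, hsnd⟩
    obtain ⟨γ, hγ, rfl⟩ := h.exists_prodCongr_eq hg hsnd
    exact ⟨⟨γ, hγ⟩, rfl⟩

theorem card_orbitRel_quotient_mul_index [Finite F] (h : IsTruncation_s10 s0 s1 s2 r0 r1 r2)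
    (htrans : ∀ x y : F, ∃ g ∈ Subgroup.closure {s0, s1, s2}, g x = y) :
    Nat.card (orbitRel.Quotient (Subgroup.centralizer {r0, r1, r2}) (F × Fin 3)) *
      (fiberPreserving (Subgroup.centralizer {r0, r1, r2})
        (Prod.snd : F × Fin 3 → Fin 3)).index =
      3 * Nat.card (orbitRel.Quotient (Subgroup.centralizer {s0, s1, s2}) F) := by
  have := Perm.isCancelSMul_centralizer htrans
  have := Perm.isCancelSMul_centralizer (h.exists_mem_closure_apply_eq htrans)
  have hR :=
    card_orbitRel_quotient_mul_card (G := Subgroup.centralizer {r0, r1, r2}) (X := F × Fin 3)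
  have hS := card_orbitRel_quotient_mul_card (G := Subgroup.centralizer {s0, s1, s2}) (X := F)
  have hK := (fiberPreserving (Subgroup.centralizer {r0, r1, r2})
    (Prod.snd : F × Fin 3 → Fin 3)).index_mul_card
  rw [h.card_fiberPreserving_centralizer] at hK
  rw [← hK, Nat.card_prod, Nat.card_fin, ← hS] at hR
  refine Nat.eq_of_mul_eq_mul_right (Nat.card_pos (α := Subgroup.centralizer {s0, s1, s2})) ?_
  linarith

theorem index_fiberPreserving_le_three [Nonempty F] (h : IsTruncation_s10 s0 s1 s2 r0 r1 r2)
    (htrans : ∀ x y : F, ∃ g ∈ Subgroup.closure {s0, s1, s2}, g x = y) :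
    (fiberPreserving (Subgroup.centralizer {r0, r1, r2})
      (Prod.snd : F × Fin 3 → Fin 3)).index ≤ 3 := by
  simpa using index_fiberPreserving_le (Classical.arbitrary (F × Fin 3)) fun _ _ hx ↦
    mem_fiberPreserving_centralizer h.closure_le_fiberPermuting
      (h.exists_mem_closure_apply_eq htrans) hx

end IsTruncation_s10

theorem truncation_orbit_count_general
    {F : Type*} [Fintype F] [Nonempty F]
    (s0 s1 s2 : Equiv.Perm F)
    (htrans : ∀ x y : F, ∃ g ∈ Subgroup.closure ({s0, s1, s2} : Set (Equiv.Perm F)), g x = y)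
    (r0 r1 r2 : Equiv.Perm (F × Fin 3))
    (hr0 : ∀ Φ : F, r0 (Φ, 0) = (s1 Φ, 0) ∧ r0 (Φ, 1) = (s0 Φ, 1) ∧ r0 (Φ, 2) = (s1 Φ, 2))
    (hr1 : ∀ Φ : F, r1 (Φ, 0) = (s2 Φ, 0) ∧ r1 (Φ, 1) = (Φ, 2) ∧ r1 (Φ, 2) = (Φ, 1))
    (hr2 : ∀ Φ : F, r2 (Φ, 0) = (Φ, 2) ∧ r2 (Φ, 1) = (s2 Φ, 1) ∧ r2 (Φ, 2) = (Φ, 0))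
    (k : ℕ)
    (hk : Nat.card (MulAction.orbitRel.Quotient
      (↥(Subgroup.centralizer ({s0, s1, s2} : Set (Equiv.Perm F)))) F) = k) :
    Nat.card (MulAction.orbitRel.Quotient
      (↥(Subgroup.centralizer ({r0, r1, r2} : Set (Equiv.Perm (F × Fin 3))))) (F × Fin 3)) = k ∨
    Nat.card (MulAction.orbitRel.Quotient
      (↥(Subgroup.centralizer ({r0, r1, r2} : Set (Equiv.Perm (F × Fin 3))))) (F × Fin 3)) = 3 * k ∨
    (Even k ∧ 2 * Nat.card (MulAction.orbitRel.Quotient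
      (↥(Subgroup.centralizer ({r0, r1, r2} : Set (Equiv.Perm (F × Fin 3))))) (F × Fin 3)) = 3 * k) := by
  have h : IsTruncation_s10 s0 s1 s2 r0 r1 r2 := ⟨fun Φ ↦ (hr0 Φ).1, fun Φ ↦ (hr0 Φ).2.1,
    fun Φ ↦ (hr0 Φ).2.2, fun Φ ↦ (hr1 Φ).1, fun Φ ↦ (hr1 Φ).2.1, fun Φ ↦ (hr1 Φ).2.2,
    fun Φ ↦ (hr2 Φ).1, fun Φ ↦ (hr2 Φ).2.1, fun Φ ↦ (hr2 Φ).2.2⟩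
  set K := fiberPreserving (Subgroup.centralizer {r0, r1, r2}) (Prod.snd : F × Fin 3 → Fin 3)
  have hcount : _ * K.index = 3 * k := hk ▸ h.card_orbitRel_quotient_mul_index htrans
  have hle : K.index ≤ 3 := h.index_fiberPreserving_le_three htrans
  have hpos : 0 < K.index := Nat.pos_of_ne_zero K.index_ne_zero_of_finite
  interval_cases K.index
  · exact Or.inr (Or.inl (by omega))
  · exact Or.inr (Or.inr ⟨Nat.even_iff.mpr (by omega), by omega⟩)
  · exact Or.inl (by omega)

/-- if M is a k-orbit map, then Tr(M) is a k-orbit, 3k-orbit, or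
(for k even) 3k/2-orbit map. -/
theorem truncation_orbit_count
    {F : Type*} [Fintype F] [Nonempty F]
    (s0 s1 s2 : Equiv.Perm F)
    (hs0i : s0 * s0 = 1) (hs0f : ∀ x, s0 x ≠ x)
    (hs1i : s1 * s1 = 1) (hs1f : ∀ x, s1 x ≠ x)
    (hs2i : s2 * s2 = 1) (hs2f : ∀ x, s2 x ≠ x)
    (hcomm : s0 * s2 = s2 * s0)
    (hs02i : (s0 * s2) * (s0 * s2) = 1) (hs02f : ∀ x, (s0 * s2) x ≠ x)
    (htrans : ∀ x y : F, ∃ g ∈ Subgroup.closure ({s0, s1, s2} : Set (Equiv.Perm F)), g x = y)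
    (r0 r1 r2 : Equiv.Perm (F × Fin 3))
    (hr0 : ∀ Φ : F, r0 (Φ, 0) = (s1 Φ, 0) ∧ r0 (Φ, 1) = (s0 Φ, 1) ∧ r0 (Φ, 2) = (s1 Φ, 2))
    (hr1 : ∀ Φ : F, r1 (Φ, 0) = (s2 Φ, 0) ∧ r1 (Φ, 1) = (Φ, 2) ∧ r1 (Φ, 2) = (Φ, 1))
    (hr2 : ∀ Φ : F, r2 (Φ, 0) = (Φ, 2) ∧ r2 (Φ, 1) = (s2 Φ, 1) ∧ r2 (Φ, 2) = (Φ, 0))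
    (k : ℕ)
    (hk : Nat.card (MulAction.orbitRel.Quotient
      (↥(Subgroup.centralizer ({s0, s1, s2} : Set (Equiv.Perm F)))) F) = k) :
    Nat.card (MulAction.orbitRel.Quotient
      (↥(Subgroup.centralizer ({r0, r1, r2} : Set (Equiv.Perm (F × Fin 3))))) (F × Fin 3)) = k ∨
    Nat.card (MulAction.orbitRel.Quotient
      (↥(Subgroup.centralizer ({r0, r1, r2} : Set (Equiv.Perm (F × Fin 3))))) (F × Fin 3)) = 3 * k ∨
    (Even k ∧ 2 * Nat.card (MulAction.orbitRel.Quotient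
      (↥(Subgroup.centralizer ({r0, r1, r2} : Set (Equiv.Perm (F × Fin 3))))) (F × Fin 3)) = 3 * k) :=
  truncation_orbit_count_general s0 s1 s2 htrans r0 r1 r2 hr0 hr1 hr2 k hk
end

section
/- Let M be a map with flag set F and generators s0, s1, s2, and let r0, r1, r2 be the truncation generators on F × {0,1,2}. If M is regular (Γ(M) acts transitively on F), then either Tr(M) is regular, or Tr(M) is a 3-orbit map whose three flag orbits are exactly F × {0}, F × {1} and F × {2} (i.e. Tr(M) has symmetry type 3^0). -/
/-!
Automorphisms of `M` act on each layer `F × {i}` of `Tr(M)` (acting trivially on the second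
coordinate), so `Γ(Tr(M))` is transitive on every layer. The monodromy generators `r₁`, `r₂` act on
the layer index as the transpositions `(1 2)` and `(0 2)`, hence monodromy realises every
permutation of the layers. Since monodromy commutes with automorphisms, a single automorphism moving
a flag to another layer, transported by monodromy, connects any two layers, and `Tr(M)` is regular;
otherwise every automorphism preserves the layers, which are then exactly the flag orbits.
-/

open Equiv

section LayeredPermGroup

variable {X L : Type*} (A : Subgroup (Perm X)) (π : X → L)

theorem Subgroup.transitive_of_exists_apply_fiber_ne
    (hfiber : ∀ x y, π x = π y → ∃ a ∈ A, a x = y)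
    (hlayer : ∀ σ : Perm L, ∃ g ∈ Subgroup.centralizer (A : Set (Perm X)),
      ∀ x, π (g x) = σ (π x))
    {a₀ : Perm X} (ha₀ : a₀ ∈ A) {x₀ : X} (hx₀ : π (a₀ x₀) ≠ π x₀) :
    ∀ x y, ∃ a ∈ A, a x = y := by
  intro x y
  by_cases hxy : π x = π y
  · exact hfiber x y hxy
  obtain ⟨σ, hσx₀, hσa₀x₀⟩ := MulAction.is_two_pretransitive_iff.mp
    (Perm.isMultiplyPretransitive L 2) (Ne.symm hx₀) hxy
  obtain ⟨g, hg, hgσ⟩ := hlayer σ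
  have hgx₀ : π (g x₀) = π x := by rw [hgσ]; exact hσx₀
  have hga₀x₀ : π (a₀ (g x₀)) = π y := by
    rw [← Perm.mul_apply, hg a₀ ha₀, Perm.mul_apply, hgσ]; exact hσa₀x₀
  obtain ⟨a₁, ha₁, ha₁x⟩ := hfiber x (g x₀) hgx₀.symm
  obtain ⟨a₂, ha₂, ha₂y⟩ := hfiber (a₀ (g x₀)) y hga₀x₀
  exact ⟨a₂ * a₀ * a₁, mul_mem (mul_mem ha₂ ha₀) ha₁, by simp [ha₁x, ha₂y]⟩

theorem Subgroup.transitive_or_orbit_eq_fiber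
    (hfiber : ∀ x y, π x = π y → ∃ a ∈ A, a x = y)
    (hlayer : ∀ σ : Perm L, ∃ g ∈ Subgroup.centralizer (A : Set (Perm X)),
      ∀ x, π (g x) = σ (π x)) :
    (∀ x y, ∃ a ∈ A, a x = y) ∨ ∀ x, MulAction.orbit A x = {y | π y = π x} := by
  by_cases hpres : ∀ a ∈ A, ∀ x, π (a x) = π x
  · refine Or.inr fun x => Set.ext fun y => ⟨?_, fun hy => ?_⟩
    · rintro ⟨a, rfl⟩
      exact hpres a a.2 x
    · obtain ⟨a, ha, rfl⟩ := hfiber x y hy.symm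
      exact ⟨⟨a, ha⟩, rfl⟩
  · push Not at hpres
    obtain ⟨a₀, ha₀, x₀, hx₀⟩ := hpres
    exact Or.inl (A.transitive_of_exists_apply_fiber_ne π hfiber hlayer ha₀ hx₀)

end LayeredPermGroup

section Truncation

variable {F : Type*} {s0 s1 s2 : Perm F} {r0 r1 r2 : Perm (F × Fin 3)}

theorem prodCongr_refl_mem_centralizer_truncation
    (hr0 : ∀ Φ : F, r0 (Φ, 0) = (s1 Φ, 0) ∧ r0 (Φ, 1) = (s0 Φ, 1) ∧ r0 (Φ, 2) = (s1 Φ, 2))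
    (hr1 : ∀ Φ : F, r1 (Φ, 0) = (s2 Φ, 0) ∧ r1 (Φ, 1) = (Φ, 2) ∧ r1 (Φ, 2) = (Φ, 1))
    (hr2 : ∀ Φ : F, r2 (Φ, 0) = (Φ, 2) ∧ r2 (Φ, 1) = (s2 Φ, 1) ∧ r2 (Φ, 2) = (Φ, 0))
    {δ : Perm F} (hδ : δ ∈ Subgroup.centralizer ({s0, s1, s2} : Set (Perm F))) :
    δ.prodCongr (Equiv.refl (Fin 3)) ∈
      Subgroup.centralizer ({r0, r1, r2} : Set (Perm (F × Fin 3))) := by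
  have hδs : ∀ s ∈ ({s0, s1, s2} : Set (Perm F)), ∀ Φ, δ (s Φ) = s (δ Φ) := fun s hs Φ => by
    rw [← Perm.mul_apply, ← Subgroup.mem_centralizer_iff.mp hδ s hs, Perm.mul_apply]
  simp only [Set.mem_insert_iff, Set.mem_singleton_iff, forall_eq_or_imp, forall_eq] at hδs
  obtain ⟨hδ0, hδ1, hδ2⟩ := hδs
  rintro r (rfl | rfl | rfl) <;> ext ⟨Φ, i⟩ <;> fin_cases i <;>
    simp [hr0, hr1, hr2, hδ0, hδ1, hδ2]

theorem snd_r1_apply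
    (hr1 : ∀ Φ : F, r1 (Φ, 0) = (s2 Φ, 0) ∧ r1 (Φ, 1) = (Φ, 2) ∧ r1 (Φ, 2) = (Φ, 1))
    (x : F × Fin 3) : (r1 x).2 = swap 1 2 x.2 := by
  obtain ⟨Φ, i⟩ := x
  fin_cases i <;> simp [hr1, swap_apply_of_ne_of_ne]

theorem snd_r2_apply
    (hr2 : ∀ Φ : F, r2 (Φ, 0) = (Φ, 2) ∧ r2 (Φ, 1) = (s2 Φ, 1) ∧ r2 (Φ, 2) = (Φ, 0))
    (x : F × Fin 3) : (r2 x).2 = swap 0 2 x.2 := by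
  obtain ⟨Φ, i⟩ := x
  fin_cases i <;> simp [hr2, swap_apply_of_ne_of_ne]

theorem exists_mem_closure_truncation_snd_eq
    (hr1 : ∀ Φ : F, r1 (Φ, 0) = (s2 Φ, 0) ∧ r1 (Φ, 1) = (Φ, 2) ∧ r1 (Φ, 2) = (Φ, 1))
    (hr2 : ∀ Φ : F, r2 (Φ, 0) = (Φ, 2) ∧ r2 (Φ, 1) = (s2 Φ, 1) ∧ r2 (Φ, 2) = (Φ, 0))
    (σ : Perm (Fin 3)) :
    ∃ g ∈ Subgroup.closure ({r0, r1, r2} : Set (Perm (F × Fin 3))), ∀ x, (g x).2 = σ x.2 := by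
  have m1 : r1 ∈ Subgroup.closure ({r0, r1, r2} : Set (Perm (F × Fin 3))) :=
    Subgroup.subset_closure (by simp)
  have m2 : r2 ∈ Subgroup.closure ({r0, r1, r2} : Set (Perm (F × Fin 3))) :=
    Subgroup.subset_closure (by simp)
  have hperm : ∀ σ : Perm (Fin 3),
      σ = 1 ∨ σ = swap 1 2 ∨ σ = swap 0 2 ∨ σ = swap 1 2 * swap 0 2 ∨
        σ = swap 0 2 * swap 1 2 ∨ σ = swap 1 2 * swap 0 2 * swap 1 2 := by
    decide
  have h1 := snd_r1_apply hr1
  have h2 := snd_r2_apply hr2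
  rcases hperm σ with rfl | rfl | rfl | rfl | rfl | rfl
  · exact ⟨1, one_mem _, fun _ => rfl⟩
  · exact ⟨r1, m1, h1⟩
  · exact ⟨r2, m2, h2⟩
  · exact ⟨r1 * r2, mul_mem m1 m2, by simp [h1, h2]⟩
  · exact ⟨r2 * r1, mul_mem m2 m1, by simp [h1, h2]⟩
  · exact ⟨r1 * r2 * r1, mul_mem (mul_mem m1 m2) m1, by simp [h1, h2]⟩

end Truncation

theorem truncation_of_regular_general
    {F : Type*}
    (s0 s1 s2 : Equiv.Perm F)
    (r0 r1 r2 : Equiv.Perm (F × Fin 3))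
    (hr0 : ∀ Φ : F, r0 (Φ, 0) = (s1 Φ, 0) ∧ r0 (Φ, 1) = (s0 Φ, 1) ∧ r0 (Φ, 2) = (s1 Φ, 2))
    (hr1 : ∀ Φ : F, r1 (Φ, 0) = (s2 Φ, 0) ∧ r1 (Φ, 1) = (Φ, 2) ∧ r1 (Φ, 2) = (Φ, 1))
    (hr2 : ∀ Φ : F, r2 (Φ, 0) = (Φ, 2) ∧ r2 (Φ, 1) = (s2 Φ, 1) ∧ r2 (Φ, 2) = (Φ, 0))
    (hreg : ∀ x y : F, ∃ γ ∈ Subgroup.centralizer ({s0, s1, s2} : Set (Equiv.Perm F)), γ x = y) :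
    (∀ x y : F × Fin 3,
      ∃ γ ∈ Subgroup.centralizer ({r0, r1, r2} : Set (Equiv.Perm (F × Fin 3))), γ x = y) ∨
    (∀ x : F × Fin 3,
      MulAction.orbit (↥(Subgroup.centralizer ({r0, r1, r2} : Set (Equiv.Perm (F × Fin 3))))) x =
        {p : F × Fin 3 | p.2 = x.2}) := by
  refine Subgroup.transitive_or_orbit_eq_fiber _ Prod.snd (fun x y hxy => ?_) fun σ => ?_
  · obtain ⟨δ, hδ, hδx⟩ := hreg x.1 y.1
    exact ⟨_, prodCongr_refl_mem_centralizer_truncation hr0 hr1 hr2 hδ, Prod.ext hδx hxy⟩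
  · obtain ⟨g, hg, hgσ⟩ := exists_mem_closure_truncation_snd_eq (r0 := r0) hr1 hr2 σ
    exact ⟨g, Subgroup.closure_le_centralizer_centralizer _ hg, hgσ⟩

/-- if M is regular, then Tr(M) is regular, or else Tr(M) is a 3-orbit map
whose three flag orbits are exactly F × {0}, F × {1}, F × {2} (symmetry type 3^0). -/
theorem truncation_of_regular
    {F : Type*} [Fintype F] [Nonempty F]
    (s0 s1 s2 : Equiv.Perm F)
    (hs0i : s0 * s0 = 1) (hs0f : ∀ x, s0 x ≠ x)
    (hs1i : s1 * s1 = 1) (hs1f : ∀ x, s1 x ≠ x)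
    (hs2i : s2 * s2 = 1) (hs2f : ∀ x, s2 x ≠ x)
    (hcomm : s0 * s2 = s2 * s0)
    (hs02i : (s0 * s2) * (s0 * s2) = 1) (hs02f : ∀ x, (s0 * s2) x ≠ x)
    (htrans : ∀ x y : F, ∃ g ∈ Subgroup.closure ({s0, s1, s2} : Set (Equiv.Perm F)), g x = y)
    (r0 r1 r2 : Equiv.Perm (F × Fin 3))
    (hr0 : ∀ Φ : F, r0 (Φ, 0) = (s1 Φ, 0) ∧ r0 (Φ, 1) = (s0 Φ, 1) ∧ r0 (Φ, 2) = (s1 Φ, 2))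
    (hr1 : ∀ Φ : F, r1 (Φ, 0) = (s2 Φ, 0) ∧ r1 (Φ, 1) = (Φ, 2) ∧ r1 (Φ, 2) = (Φ, 1))
    (hr2 : ∀ Φ : F, r2 (Φ, 0) = (Φ, 2) ∧ r2 (Φ, 1) = (s2 Φ, 1) ∧ r2 (Φ, 2) = (Φ, 0))
    (hreg : ∀ x y : F, ∃ γ ∈ Subgroup.centralizer ({s0, s1, s2} : Set (Equiv.Perm F)), γ x = y) :
    (∀ x y : F × Fin 3,
      ∃ γ ∈ Subgroup.centralizer ({r0, r1, r2} : Set (Equiv.Perm (F × Fin 3))), γ x = y) ∨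
    (∀ x : F × Fin 3,
      MulAction.orbit (↥(Subgroup.centralizer ({r0, r1, r2} : Set (Equiv.Perm (F × Fin 3))))) x =
        {p : F × Fin 3 | p.2 = x.2}) :=
  truncation_of_regular_general s0 s1 s2 r0 r1 r2 hr0 hr1 hr2 hreg
end

section
/- Let M be a map with flag set F and generators s0, s1, s2, and let r0, r1, r2 be the truncation generators on F × {0,1,2}. Then there exists a subgroup H of Γ(Tr(M)) whose orbits on F × {0,1,2} are exactly the three sets F × {0}, F × {1} and F × {2} if and only if M is regular. -/
/-!
An automorphism of `Tr(M)` preserving each layer `F × {i}` is determined by its action on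
`F × {0}`, since `r2` and `r1` carry that layer onto the other two; so it is the diagonal lift
`(Φ, i) ↦ (γ Φ, i)` of a permutation `γ` of `F`. Such a lift commutes with `r0, r1, r2` exactly
when `γ` commutes with `s0, s1, s2`. Hence the subgroups of `Γ(Tr(M))` with the three layers as
orbits are lifts of subgroups of `Γ(M)` transitive on `F`, and these exist iff `M` is regular.
-/

open Equiv

namespace Equiv.Perm

variable {F α : Type*}

def prodCongrReflHom : Perm F →* Perm (F × α) where
  toFun γ := γ.prodCongr (Equiv.refl α)
  map_one' := rfl
  map_mul' _ _ := rfl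

@[simp]
theorem prodCongrReflHom_apply (γ : Perm F) (p : F × α) :
    prodCongrReflHom γ p = (γ p.1, p.2) :=
  rfl

theorem mem_orbit_map_prodCongrReflHom_iff (K : Subgroup (Perm F)) (p q : F × α) :
    p ∈ MulAction.orbit (K.map (prodCongrReflHom (α := α))) q ↔
      p.1 ∈ MulAction.orbit K q.1 ∧ p.2 = q.2 := by
  constructor
  · rintro ⟨⟨_, γ, hγ, rfl⟩, rfl⟩
    exact ⟨⟨⟨γ, hγ⟩, rfl⟩, rfl⟩
  · rintro ⟨⟨γ, hγ⟩, hq⟩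
    exact ⟨⟨prodCongrReflHom γ, K.mem_map_of_mem _ γ.2⟩, Prod.ext hγ hq.symm⟩

def restrictFiber (g : Perm (F × α)) (hg : ∀ p, (g p).2 = p.2) (a : α) : Perm F where
  toFun Φ := (g (Φ, a)).1
  invFun Φ := (g⁻¹ (Φ, a)).1
  left_inv Φ := by
    dsimp only
    rw [show ((g (Φ, a)).1, a) = g (Φ, a) from Prod.ext rfl (hg (Φ, a)).symm]
    simp
  right_inv Φ := by
    have hinv : (g⁻¹ (Φ, a)).2 = a := by simpa using (hg (g⁻¹ (Φ, a))).symm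
    dsimp only
    rw [show ((g⁻¹ (Φ, a)).1, a) = g⁻¹ (Φ, a) from Prod.ext rfl hinv.symm]
    simp

end Equiv.Perm

open Equiv.Perm

section Truncation

variable {F : Type*} {s0 s1 s2 : Perm F} {r0 r1 r2 : Perm (F × Fin 3)}

theorem prodCongrReflHom_mem_centralizer_iff
    (hr0 : ∀ Φ : F, r0 (Φ, 0) = (s1 Φ, 0) ∧ r0 (Φ, 1) = (s0 Φ, 1) ∧ r0 (Φ, 2) = (s1 Φ, 2))
    (hr1 : ∀ Φ : F, r1 (Φ, 0) = (s2 Φ, 0) ∧ r1 (Φ, 1) = (Φ, 2) ∧ r1 (Φ, 2) = (Φ, 1))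
    (hr2 : ∀ Φ : F, r2 (Φ, 0) = (Φ, 2) ∧ r2 (Φ, 1) = (s2 Φ, 1) ∧ r2 (Φ, 2) = (Φ, 0))
    (γ : Perm F) :
    prodCongrReflHom γ ∈ Subgroup.centralizer ({r0, r1, r2} : Set (Perm (F × Fin 3))) ↔
      γ ∈ Subgroup.centralizer ({s0, s1, s2} : Set (Perm F)) := by
  simp only [Subgroup.mem_centralizer_iff, Set.forall_mem_insert, Set.mem_singleton_iff, forall_eq]
  simp only [Equiv.ext_iff, Perm.mul_apply, Prod.forall, Fin.forall_fin_succ,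
    prodCongrReflHom_apply, hr0, hr1, hr2, Prod.mk.injEq, and_true, Fin.succ_zero_eq_one,
    Fin.succ_one_eq_two, IsEmpty.forall_iff, forall_and, true_and]
  tauto

theorem prodCongrReflHom_restrictFiber_zero
    (hr1 : ∀ Φ : F, r1 (Φ, 0) = (s2 Φ, 0) ∧ r1 (Φ, 1) = (Φ, 2) ∧ r1 (Φ, 2) = (Φ, 1))
    (hr2 : ∀ Φ : F, r2 (Φ, 0) = (Φ, 2) ∧ r2 (Φ, 1) = (s2 Φ, 1) ∧ r2 (Φ, 2) = (Φ, 0))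
    {g : Perm (F × Fin 3)} (hg : ∀ p, (g p).2 = p.2) (h1 : Commute r1 g) (h2 : Commute r2 g) :
    prodCongrReflHom (restrictFiber g hg 0) = g := by
  have level0 (Φ : F) : g (Φ, 0) = ((g (Φ, 0)).1, 0) := Prod.ext rfl (hg (Φ, 0))
  have level2 (Φ : F) : g (Φ, 2) = ((g (Φ, 0)).1, 2) := by
    rw [← (hr2 Φ).1, ← Perm.mul_apply, ← h2.eq, Perm.mul_apply, level0, (hr2 _).1]
  have level1 (Φ : F) : g (Φ, 1) = ((g (Φ, 0)).1, 1) := by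
    rw [← (hr1 Φ).2.2, ← Perm.mul_apply, ← h1.eq, Perm.mul_apply, level2, (hr1 _).2.2]
  ext1 ⟨Φ, i⟩
  fin_cases i
  · exact (level0 Φ).symm
  · exact (level1 Φ).symm
  · exact (level2 Φ).symm

end Truncation

theorem truncation_three_zero_quotient_iff_regular_general
    {F : Type*}
    (s0 s1 s2 : Equiv.Perm F)
    (r0 r1 r2 : Equiv.Perm (F × Fin 3))
    (hr0 : ∀ Φ : F, r0 (Φ, 0) = (s1 Φ, 0) ∧ r0 (Φ, 1) = (s0 Φ, 1) ∧ r0 (Φ, 2) = (s1 Φ, 2))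
    (hr1 : ∀ Φ : F, r1 (Φ, 0) = (s2 Φ, 0) ∧ r1 (Φ, 1) = (Φ, 2) ∧ r1 (Φ, 2) = (Φ, 1))
    (hr2 : ∀ Φ : F, r2 (Φ, 0) = (Φ, 2) ∧ r2 (Φ, 1) = (s2 Φ, 1) ∧ r2 (Φ, 2) = (Φ, 0)) :
    (∃ H : Subgroup (Equiv.Perm (F × Fin 3)),
      H ≤ Subgroup.centralizer ({r0, r1, r2} : Set (Equiv.Perm (F × Fin 3))) ∧
      ∀ x : F × Fin 3, MulAction.orbit (↥H) x = {p : F × Fin 3 | p.2 = x.2}) ↔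
    (∀ x y : F, ∃ γ ∈ Subgroup.centralizer ({s0, s1, s2} : Set (Equiv.Perm F)), γ x = y) := by
  constructor
  · rintro ⟨H, hH, horbit⟩ x y
    obtain ⟨⟨g, hgH⟩, hgxy⟩ : (y, 0) ∈ MulAction.orbit H (x, (0 : Fin 3)) := by
      rw [horbit]; rfl
    have hlevel (p : F × Fin 3) : (g p).2 = p.2 := by
      have : g p ∈ MulAction.orbit H p := ⟨⟨g, hgH⟩, rfl⟩
      rwa [horbit] at this
    have hg := hH hgH
    have hlift := prodCongrReflHom_restrictFiber_zero hr1 hr2 hlevel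
      (Subgroup.mem_centralizer_iff.mp hg r1 (by simp))
      (Subgroup.mem_centralizer_iff.mp hg r2 (by simp))
    refine ⟨restrictFiber g hlevel 0, ?_, congrArg Prod.fst hgxy⟩
    rwa [← prodCongrReflHom_mem_centralizer_iff hr0 hr1 hr2, hlift]
  · intro hreg
    refine ⟨(Subgroup.centralizer {s0, s1, s2}).map prodCongrReflHom, ?_, fun q ↦ ?_⟩
    · exact Subgroup.map_le_iff_le_comap.mpr fun γ ↦
        (prodCongrReflHom_mem_centralizer_iff hr0 hr1 hr2 γ).mpr
    · ext p
      rw [mem_orbit_map_prodCongrReflHom_iff, Set.mem_ofPred_eq, and_iff_right_iff_imp]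
      obtain ⟨γ, hγ, hγq⟩ := hreg q.1 p.1
      exact fun _ ↦ ⟨⟨γ, hγ⟩, hγq⟩

/-- there exists a subgroup H of Γ(Tr(M)) whose orbits on F × {0,1,2} are
exactly the three sets F × {0}, F × {1}, F × {2} if and only if M is regular. -/
theorem truncation_three_zero_quotient_iff_regular
    {F : Type*} [Fintype F] [Nonempty F]
    (s0 s1 s2 : Equiv.Perm F)
    (hs0i : s0 * s0 = 1) (hs0f : ∀ x, s0 x ≠ x)
    (hs1i : s1 * s1 = 1) (hs1f : ∀ x, s1 x ≠ x)
    (hs2i : s2 * s2 = 1) (hs2f : ∀ x, s2 x ≠ x)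
    (hcomm : s0 * s2 = s2 * s0)
    (hs02i : (s0 * s2) * (s0 * s2) = 1) (hs02f : ∀ x, (s0 * s2) x ≠ x)
    (htrans : ∀ x y : F, ∃ g ∈ Subgroup.closure ({s0, s1, s2} : Set (Equiv.Perm F)), g x = y)
    (r0 r1 r2 : Equiv.Perm (F × Fin 3))
    (hr0 : ∀ Φ : F, r0 (Φ, 0) = (s1 Φ, 0) ∧ r0 (Φ, 1) = (s0 Φ, 1) ∧ r0 (Φ, 2) = (s1 Φ, 2))
    (hr1 : ∀ Φ : F, r1 (Φ, 0) = (s2 Φ, 0) ∧ r1 (Φ, 1) = (Φ, 2) ∧ r1 (Φ, 2) = (Φ, 1))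
    (hr2 : ∀ Φ : F, r2 (Φ, 0) = (Φ, 2) ∧ r2 (Φ, 1) = (s2 Φ, 1) ∧ r2 (Φ, 2) = (Φ, 0)) :
    (∃ H : Subgroup (Equiv.Perm (F × Fin 3)),
      H ≤ Subgroup.centralizer ({r0, r1, r2} : Set (Equiv.Perm (F × Fin 3))) ∧
      ∀ x : F × Fin 3, MulAction.orbit (↥H) x = {p : F × Fin 3 | p.2 = x.2}) ↔
    (∀ x y : F, ∃ γ ∈ Subgroup.centralizer ({s0, s1, s2} : Set (Equiv.Perm F)), γ x = y) :=
  truncation_three_zero_quotient_iff_regular_general s0 s1 s2 r0 r1 r2 hr0 hr1 hr2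
end

section
/- Let M be a map with flag set F and generators s0, s1, s2, and let r0, r1, r2 be the truncation generators on F × {0,1,2}. Suppose M is a 3-orbit map and Tr(M) is a 3-orbit map. Then both M and Tr(M) are of type 3^{02}. -/
/-!
An automorphism of M acts on every layer `F × {i}` of Tr(M). Conversely, the words
`r0`, `r1` and `r2 r1 r0 r1 r2` map layer 0 to itself, act there as `s1`, `s2`, `s0`, and map
the other layers among themselves; so an automorphism of Tr(M) sending one flag of layer 0 into
layer 0 keeps all of layer 0 there (M is connected) and restricts to an automorphism of M.
Hence two flags of layer 0 lie in the same orbit of Tr(M) exactly when they lie in the same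
orbit of M, and as both maps have three orbits, labelling the orbits of M and of Tr(M) by one
set `Fin 3` makes the labels agree on layer 0. The generators then induce permutations of
`Fin 3`, tied together by the relations of M and of the truncation, and a finite check over
`Fin 3` shows that every solution is of type 3^{02}, both for M and for Tr(M).
-/

/-- The automorphism group of a map with generators t0, t1, t2. -/
def mapAut {α : Type*} (t0 t1 t2 : Equiv.Perm α) : Subgroup (Equiv.Perm α) :=
  Subgroup.centralizer {t0, t1, t2}

/-- A 3-orbit map with generators t0, t1, t2 is of type 3^{02} if its three flag orbits can be
labelled O1, O2, O3 so that t0 and t2 each map O1 to itself and interchange O2 and O3,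
while t1 interchanges O1 and O2 and maps O3 to itself. -/
def isOfType302 {α : Type*} (t0 t1 t2 : Equiv.Perm α) : Prop :=
  ∃ O1 O2 O3 : Set α,
    (∃ x, MulAction.orbit (↥(mapAut t0 t1 t2)) x = O1) ∧
    (∃ x, MulAction.orbit (↥(mapAut t0 t1 t2)) x = O2) ∧
    (∃ x, MulAction.orbit (↥(mapAut t0 t1 t2)) x = O3) ∧
    O1 ≠ O2 ∧ O1 ≠ O3 ∧ O2 ≠ O3 ∧
    (∀ x, MulAction.orbit (↥(mapAut t0 t1 t2)) x = O1 ∨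
          MulAction.orbit (↥(mapAut t0 t1 t2)) x = O2 ∨
          MulAction.orbit (↥(mapAut t0 t1 t2)) x = O3) ∧
    ⇑t0 '' O1 = O1 ∧ ⇑t0 '' O2 = O3 ∧ ⇑t0 '' O3 = O2 ∧
    ⇑t2 '' O1 = O1 ∧ ⇑t2 '' O2 = O3 ∧ ⇑t2 '' O3 = O2 ∧
    ⇑t1 '' O1 = O2 ∧ ⇑t1 '' O2 = O1 ∧ ⇑t1 '' O3 = O3

open Equiv Function MulAction Subgroup

section OrbitLabels

variable {G H α α' β : Type*}

def IsOrbitLabel (G : Type*) [Group G] [MulAction G α] (ℓ : α → β) : Prop :=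
  Surjective ℓ ∧ ∀ x y, ℓ x = ℓ y ↔ x ∈ orbit G y

theorem exists_isOrbitLabel_of_card [Group G] [MulAction G α] {n : ℕ} [NeZero n]
    (h : Nat.card (orbitRel.Quotient G α) = n) : ∃ ℓ : α → Fin n, IsOrbitLabel G ℓ := by
  have : Finite (orbitRel.Quotient G α) := Nat.finite_of_card_ne_zero (h ▸ NeZero.ne n)
  let e := Finite.equivFinOfCardEq h
  refine ⟨fun x => e (Quotient.mk _ x), e.surjective.comp Quotient.mk_surjective, fun x y => ?_⟩
  rw [e.apply_eq_iff_eq, Quotient.eq, orbitRel_apply]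

theorem exists_perm_comp_eq [Finite β] {ℓ g : α → β} (hℓ : Surjective ℓ)
    (h : ∀ x y, g x = g y ↔ ℓ x = ℓ y) : ∃ π : Perm β, g = π ∘ ℓ := by
  have hg : FactorsThrough g ℓ := fun x y hxy => (h x y).2 hxy
  have hφ : ∀ x, extend ℓ g id (ℓ x) = g x := hg.extend_apply id
  have hinj : Injective (extend ℓ g id) := by
    intro j k hjk
    obtain ⟨x, rfl⟩ := hℓ j
    obtain ⟨y, rfl⟩ := hℓ k
    rw [hφ, hφ] at hjk
    exact (h x y).1 hjk
  exact ⟨ofBijective _ (Finite.injective_iff_bijective.mp hinj), funext fun x => (hφ x).symm⟩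

namespace IsOrbitLabel

variable [Group G] [MulAction G α] {ℓ : α → β}

theorem comp_equiv {γ : Type*} (hℓ : IsOrbitLabel G ℓ) (e : β ≃ γ) : IsOrbitLabel G (e ∘ ℓ) :=
  ⟨e.surjective.comp hℓ.1, fun x y => e.apply_eq_iff_eq.trans (hℓ.2 x y)⟩

theorem orbit_eq_preimage (hℓ : IsOrbitLabel G ℓ) (x : α) : orbit G x = ℓ ⁻¹' {ℓ x} :=
  Set.ext fun y => (hℓ.2 y x).symm

theorem exists_comp_eq [Group H] [MulAction H α'] [Finite β] (hℓ : IsOrbitLabel G ℓ)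
    {ℓ' : α' → β} (hℓ' : IsOrbitLabel H ℓ') {f : α → α'}
    (hf : ∀ x y, f x ∈ orbit H (f y) ↔ x ∈ orbit G y) :
    ∃ ℓ'' : α' → β, IsOrbitLabel H ℓ'' ∧ ∀ x, ℓ'' (f x) = ℓ x := by
  obtain ⟨π, hπ⟩ := exists_perm_comp_eq (g := ℓ' ∘ f) hℓ.1 fun x y => by
    simp only [comp_apply, hℓ'.2, hℓ.2, hf]
  exact ⟨π.symm ∘ ℓ', hℓ'.comp_equiv π.symm, fun x => π.symm_apply_eq.mpr (congrFun hπ x)⟩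

end IsOrbitLabel

end OrbitLabels

theorem Function.Surjective.perm_eq_of_semiconj {α β : Type*} {ℓ : α → β} (hℓ : Surjective ℓ)
    {t : α → α} {σ τ : Perm β} (hσ : Semiconj ℓ t σ) (hτ : Semiconj ℓ t τ) : σ = τ :=
  Equiv.ext fun j => by
    obtain ⟨x, rfl⟩ := hℓ j
    rw [← hσ x, ← hτ x]

theorem semiconj_perm_mul {α β : Type*} {ℓ : α → β} {a b : Perm α} {σ τ : Perm β}
    (ha : Semiconj ℓ a σ) (hb : Semiconj ℓ b τ) : Semiconj ℓ ⇑(a * b) ⇑(σ * τ) :=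
  ha.comp_right hb

theorem image_preimage_singleton_of_semiconj {α β : Type*} {ℓ : α → β} {t : Perm α}
    {τ : Perm β} (h : Semiconj ℓ t τ) {j k : β} (hjk : τ j = k) :
    t '' (ℓ ⁻¹' {j}) = ℓ ⁻¹' {k} := by
  ext x
  constructor
  · rintro ⟨y, rfl : ℓ y = j, rfl⟩
    exact (h y).trans hjk
  · intro (hx : ℓ x = k)
    refine ⟨t.symm x, τ.injective ?_, t.apply_symm_apply x⟩
    rw [← h, t.apply_symm_apply, hx, hjk]

section PermSubgroups

variable {α β : Type*}

theorem mem_orbit_subgroup_perm_iff {H : Subgroup (Perm α)} {x y : α} :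
    x ∈ orbit H y ↔ ∃ g ∈ H, g y = x :=
  mem_orbit_iff.trans ⟨fun ⟨g, h⟩ => ⟨g, g.2, h⟩, fun ⟨g, hg, h⟩ => ⟨⟨g, hg⟩, h⟩⟩

theorem apply_mem_orbit_apply_iff {H : Subgroup (Perm α)} {t : Perm α}
    (ht : t ∈ centralizer (H : Set (Perm α))) {x y : α} :
    t x ∈ orbit H (t y) ↔ x ∈ orbit H y := by
  simp only [mem_orbit_subgroup_perm_iff]
  refine exists_congr fun g => and_congr_right fun hg => ?_
  rw [← Perm.mul_apply, mem_centralizer_iff.mp ht g hg, Perm.mul_apply, t.apply_eq_iff_eq]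

theorem IsOrbitLabel.exists_perm_semiconj [Finite β] {H : Subgroup (Perm α)} {ℓ : α → β}
    (hℓ : IsOrbitLabel H ℓ) {t : Perm α} (ht : t ∈ centralizer (H : Set (Perm α))) :
    ∃ σ : Perm β, Semiconj ℓ t σ := by
  obtain ⟨σ, hσ⟩ := exists_perm_comp_eq (g := ℓ ∘ t) hℓ.1 fun x y => by
    simp only [comp_apply, hℓ.2, apply_mem_orbit_apply_iff ht]
  exact ⟨σ, congrFun hσ⟩

theorem mem_centralizer_mapAut {t0 t1 t2 t : Perm α} (ht : t ∈ ({t0, t1, t2} : Set (Perm α))) :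
    t ∈ centralizer (mapAut t0 t1 t2 : Set (Perm α)) :=
  mem_centralizer_iff.mpr fun _ hg => (mem_centralizer_iff.mp hg t ht).symm

theorem apply_eq_apply_of_closure_transitive {S : Set (Perm α)}
    (htrans : ∀ x y, ∃ g ∈ closure S, g x = y) {f : α → β} (hf : ∀ s ∈ S, ∀ x, f (s x) = f x)
    (x y : α) : f x = f y := by
  obtain ⟨g, hg, rfl⟩ := htrans x y
  induction hg using closure_induction generalizing x with
  | mem s hs => exact (hf s hs x).symm
  | one => rfl
  | mul a b _ _ ha hb => exact (hb x).trans (ha (b x))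
  | inv a _ ha => simpa using (ha (a⁻¹ x)).symm

end PermSubgroups

section Layers

variable {F β : Type*}

def IsLayerLift (b : β) (s : Perm F) (w : Perm (F × β)) : Prop :=
  (∀ y, (w y).2 = b ↔ y.2 = b) ∧ ∀ x, w (x, b) = (s x, b)

theorem exists_mem_centralizer_apply_eq_of_layer [Finite F] {S : Set (Perm F)}
    (htrans : ∀ x y, ∃ g ∈ closure S, g x = y) {b : β} {γ : Perm (F × β)}
    (hlift : ∀ s ∈ S, ∃ w, Commute γ w ∧ IsLayerLift b s w) {x y : F}
    (h : γ (x, b) = (y, b)) : ∃ g ∈ centralizer S, g x = y := by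
  have hstep : ∀ s ∈ S, ∃ w, IsLayerLift b s w ∧ ∀ z, γ (s z, b) = w (γ (z, b)) := by
    intro s hs
    obtain ⟨w, hγw, hw⟩ := hlift s hs
    exact ⟨w, hw, fun z => by rw [← hw.2 z, ← Perm.mul_apply, hγw.eq, Perm.mul_apply]⟩
  have hlayer : ∀ z, (γ (z, b)).2 = b := fun z => by
    refine (apply_eq_apply_of_closure_transitive htrans (f := fun z => (γ (z, b)).2 = b) ?_ z x).mpr
      (by rw [h])
    intro s hs z
    obtain ⟨w, hw, hγw⟩ := hstep s hs
    exact propext (by rw [hγw z, hw.1])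
  set g : F → F := fun z => (γ (z, b)).1
  have hg : ∀ z, γ (z, b) = (g z, b) := fun z => Prod.ext rfl (hlayer z)
  have hgs : ∀ s ∈ S, ∀ z, s (g z) = g (s z) := by
    intro s hs z
    obtain ⟨w, hw, hγw⟩ := hstep s hs
    exact congrArg Prod.fst ((hw.2 (g z)).symm.trans (by rw [← hg, hγw]))
  have hinj : Injective g := fun z z' hzz' =>
    congrArg Prod.fst (γ.injective ((hg z).trans (by rw [hzz', hg])))
  exact ⟨ofBijective g (Finite.injective_iff_bijective.mp hinj),
    mem_centralizer_iff.mpr fun s hs => Equiv.ext (hgs s hs), congrArg Prod.fst h⟩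

theorem IsLayerLift.semiconj {γ : Type*} {b : β} {s : Perm F} {w : Perm (F × β)}
    (hw : IsLayerLift b s w) {ℓ : F → γ} {ℓ' : F × β → γ} (hℓ' : ∀ x, ℓ' (x, b) = ℓ x)
    {ρ : Perm γ} (hρ : Semiconj ℓ' w ρ) : Semiconj ℓ s ρ := fun x => by
  rw [← hℓ', ← hw.2, hρ, hℓ']

end Layers

section Truncation

variable {F : Type*}

def IsTruncation_s16 (s0 s1 s2 : Perm F) (r0 r1 r2 : Perm (F × Fin 3)) : Prop :=
  (∀ Φ : F, r0 (Φ, 0) = (s1 Φ, 0) ∧ r0 (Φ, 1) = (s0 Φ, 1) ∧ r0 (Φ, 2) = (s1 Φ, 2)) ∧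
  (∀ Φ : F, r1 (Φ, 0) = (s2 Φ, 0) ∧ r1 (Φ, 1) = (Φ, 2) ∧ r1 (Φ, 2) = (Φ, 1)) ∧
  (∀ Φ : F, r2 (Φ, 0) = (Φ, 2) ∧ r2 (Φ, 1) = (s2 Φ, 1) ∧ r2 (Φ, 2) = (Φ, 0))

namespace IsTruncation_s16

variable {s0 s1 s2 : Perm F} {r0 r1 r2 : Perm (F × Fin 3)}

theorem isLayerLift_s0 (hT : IsTruncation_s16 s0 s1 s2 r0 r1 r2) :
    IsLayerLift 0 s0 (r2 * r1 * r0 * r1 * r2) := by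
  obtain ⟨hr0, hr1, hr2⟩ := hT
  refine ⟨fun ⟨x, i⟩ => ?_, fun x => by simp [hr0, hr1, hr2]⟩
  fin_cases i <;> simp [hr0, hr1, hr2]

theorem isLayerLift_s1 (hT : IsTruncation_s16 s0 s1 s2 r0 r1 r2) : IsLayerLift 0 s1 r0 := by
  obtain ⟨hr0, -, -⟩ := hT
  refine ⟨fun ⟨x, i⟩ => ?_, fun x => (hr0 x).1⟩
  fin_cases i <;> simp [hr0]

theorem isLayerLift_s2 (hT : IsTruncation_s16 s0 s1 s2 r0 r1 r2) : IsLayerLift 0 s2 r1 := by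
  obtain ⟨-, hr1, -⟩ := hT
  refine ⟨fun ⟨x, i⟩ => ?_, fun x => (hr1 x).1⟩
  fin_cases i <;> simp [hr1]

theorem r0_mul_r2_comm (hT : IsTruncation_s16 s0 s1 s2 r0 r1 r2) (hcomm : s0 * s2 = s2 * s0) :
    r0 * r2 = r2 * r0 := by
  obtain ⟨hr0, -, hr2⟩ := hT
  refine Equiv.ext fun ⟨x, i⟩ => ?_
  have hc : ∀ x, s0 (s2 x) = s2 (s0 x) := Equiv.ext_iff.mp hcomm
  fin_cases i <;> simp [hr0, hr2, hc]

theorem r2_mul_self (hT : IsTruncation_s16 s0 s1 s2 r0 r1 r2) (hs2 : s2 * s2 = 1) : r2 * r2 = 1 := by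
  obtain ⟨-, -, hr2⟩ := hT
  refine Equiv.ext fun ⟨x, i⟩ => ?_
  have hs2' : ∀ x, s2 (s2 x) = x := Equiv.ext_iff.mp hs2
  fin_cases i <;> simp [hr2, hs2']

theorem prodCongr_mem_mapAut (hT : IsTruncation_s16 s0 s1 s2 r0 r1 r2) {g : Perm F}
    (hg : g ∈ mapAut s0 s1 s2) : g.prodCongr (Equiv.refl (Fin 3)) ∈ mapAut r0 r1 r2 := by
  obtain ⟨hr0, hr1, hr2⟩ := hT
  have hc : ∀ s ∈ ({s0, s1, s2} : Set (Perm F)), ∀ x, s (g x) = g (s x) :=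
    fun s hs => Equiv.ext_iff.mp (mem_centralizer_iff.mp hg s hs)
  simp only [Set.mem_insert_iff, Set.mem_singleton_iff, forall_eq_or_imp, forall_eq] at hc
  refine mem_centralizer_iff.mpr ?_
  rintro r (rfl | rfl | rfl) <;> refine Equiv.ext fun ⟨x, i⟩ => ?_ <;> fin_cases i <;>
    simp [hr0, hr1, hr2, hc]

theorem mem_orbit_iff [Finite F] (hT : IsTruncation_s16 s0 s1 s2 r0 r1 r2)
    (htrans : ∀ x y, ∃ g ∈ closure {s0, s1, s2}, g x = y) (x y : F) :
    ((x, 0) : F × Fin 3) ∈ orbit (mapAut r0 r1 r2) (y, 0) ↔ x ∈ orbit (mapAut s0 s1 s2) y := by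
  simp only [mem_orbit_subgroup_perm_iff]
  constructor
  · rintro ⟨γ, hγ, h⟩
    have hc : ∀ r ∈ ({r0, r1, r2} : Set (Perm (F × Fin 3))), Commute γ r :=
      fun r hr => (mem_centralizer_iff.mp hγ r hr).symm
    simp only [Set.mem_insert_iff, Set.mem_singleton_iff, forall_eq_or_imp, forall_eq] at hc
    obtain ⟨hc0, hc1, hc2⟩ := hc
    refine exists_mem_centralizer_apply_eq_of_layer htrans ?_ h
    rintro s (rfl | rfl | rfl)
    · exact ⟨_, (((hc2.mul_right hc1).mul_right hc0).mul_right hc1).mul_right hc2,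
        hT.isLayerLift_s0⟩
    · exact ⟨r0, hc0, hT.isLayerLift_s1⟩
    · exact ⟨r1, hc1, hT.isLayerLift_s2⟩
  · rintro ⟨g, hg, rfl⟩
    exact ⟨_, hT.prodCongr_mem_mapAut hg, rfl⟩

end IsTruncation_s16

end Truncation

def IsType302Action (τ0 τ1 τ2 : Perm (Fin 3)) : Prop :=
  ∃ π : Perm (Fin 3), Semiconj π τ0 (swap 1 2) ∧ Semiconj π τ1 (swap 0 1) ∧ Semiconj π τ2 (swap 1 2)

set_option synthInstance.maxSize 512 in
set_option maxRecDepth 10000 in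
theorem isType302Action_of_relations {σ0 σ1 σ2 ρ0 ρ1 ρ2 : Perm (Fin 3)}
    (h0 : σ0 = ρ2 * ρ1 * ρ0 * ρ1 * ρ2) (h1 : σ1 = ρ0) (h2 : σ2 = ρ1)
    (hσ0 : σ0 * σ0 = 1) (hσ2 : σ2 * σ2 = 1) (hσ02 : σ0 * σ2 = σ2 * σ0)
    (hρ2 : ρ2 * ρ2 = 1) (hρ02 : ρ0 * ρ2 = ρ2 * ρ0)
    (htrans : ∀ φ : Fin 3 → Bool, (∀ j, φ (σ0 j) = φ j) → (∀ j, φ (σ1 j) = φ j) →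
      (∀ j, φ (σ2 j) = φ j) → ∀ j k, φ j = φ k) :
    IsType302Action σ0 σ1 σ2 ∧ IsType302Action ρ0 ρ1 ρ2 := by
  subst h0 h1 h2
  revert σ1 σ2 ρ2
  unfold IsType302Action Semiconj
  decide

theorem IsTruncation_s16.isType302Action {F : Type*} {s0 s1 s2 : Perm F}
    {r0 r1 r2 : Perm (F × Fin 3)} (hT : IsTruncation_s16 s0 s1 s2 r0 r1 r2)
    (hs0 : s0 * s0 = 1) (hs2 : s2 * s2 = 1) (hcomm : s0 * s2 = s2 * s0)
    (htrans : ∀ x y, ∃ g ∈ closure {s0, s1, s2}, g x = y)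
    {ℓ : F → Fin 3} {ℓ' : F × Fin 3 → Fin 3} (hℓ : Surjective ℓ) (hℓ' : ∀ x, ℓ' (x, 0) = ℓ x)
    {σ0 σ1 σ2 ρ0 ρ1 ρ2 : Perm (Fin 3)} (hσ0 : Semiconj ℓ s0 σ0) (hσ1 : Semiconj ℓ s1 σ1)
    (hσ2 : Semiconj ℓ s2 σ2) (hρ0 : Semiconj ℓ' r0 ρ0) (hρ1 : Semiconj ℓ' r1 ρ1)
    (hρ2 : Semiconj ℓ' r2 ρ2) :
    IsType302Action σ0 σ1 σ2 ∧ IsType302Action ρ0 ρ1 ρ2 := by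
  have hsurj' : Surjective ℓ' := fun j =>
    let ⟨x, hx⟩ := hℓ j; ⟨(x, 0), (hℓ' x).trans hx⟩
  have h0 : σ0 = ρ2 * ρ1 * ρ0 * ρ1 * ρ2 :=
    hℓ.perm_eq_of_semiconj hσ0 (hT.isLayerLift_s0.semiconj hℓ' <| semiconj_perm_mul
      (semiconj_perm_mul (semiconj_perm_mul (semiconj_perm_mul hρ2 hρ1) hρ0) hρ1) hρ2)
  have h1 : σ1 = ρ0 := hℓ.perm_eq_of_semiconj hσ1 (hT.isLayerLift_s1.semiconj hℓ' hρ0)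
  have h2 : σ2 = ρ1 := hℓ.perm_eq_of_semiconj hσ2 (hT.isLayerLift_s2.semiconj hℓ' hρ1)
  have hσ00 : σ0 * σ0 = 1 := hℓ.perm_eq_of_semiconj (semiconj_perm_mul hσ0 hσ0)
    (by rw [hs0]; exact Semiconj.id_right)
  have hσ22 : σ2 * σ2 = 1 := hℓ.perm_eq_of_semiconj (semiconj_perm_mul hσ2 hσ2)
    (by rw [hs2]; exact Semiconj.id_right)
  have hσ02 : σ0 * σ2 = σ2 * σ0 := hℓ.perm_eq_of_semiconj (semiconj_perm_mul hσ0 hσ2)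
    (by rw [hcomm]; exact semiconj_perm_mul hσ2 hσ0)
  have hρ22 : ρ2 * ρ2 = 1 := hsurj'.perm_eq_of_semiconj (semiconj_perm_mul hρ2 hρ2)
    (by rw [hT.r2_mul_self hs2]; exact Semiconj.id_right)
  have hρ02 : ρ0 * ρ2 = ρ2 * ρ0 := hsurj'.perm_eq_of_semiconj (semiconj_perm_mul hρ0 hρ2)
    (by rw [hT.r0_mul_r2_comm hcomm]; exact semiconj_perm_mul hρ2 hρ0)
  refine isType302Action_of_relations h0 h1 h2 hσ00 hσ22 hσ02 hρ22 hρ02 fun φ hφ0 hφ1 hφ2 j k => ?_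
  obtain ⟨x, rfl⟩ := hℓ j
  obtain ⟨y, rfl⟩ := hℓ k
  refine apply_eq_apply_of_closure_transitive htrans (f := φ ∘ ℓ) ?_ x y
  rintro s (rfl | rfl | rfl) z
  · exact (congrArg φ (hσ0 z)).trans (hφ0 _)
  · exact (congrArg φ (hσ1 z)).trans (hφ1 _)
  · exact (congrArg φ (hσ2 z)).trans (hφ2 _)

theorem isOfType302_of_isOrbitLabel {α : Type*} {t0 t1 t2 : Perm α} {ℓ : α → Fin 3}
    (hℓ : IsOrbitLabel (mapAut t0 t1 t2) ℓ) (h0 : Semiconj ℓ t0 (swap 1 2))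
    (h1 : Semiconj ℓ t1 (swap 0 1)) (h2 : Semiconj ℓ t2 (swap 1 2)) : isOfType302 t0 t1 t2 := by
  have hfiber : ∀ j, ∃ x, orbit (mapAut t0 t1 t2) x = ℓ ⁻¹' {j} := fun j => by
    obtain ⟨x, rfl⟩ := hℓ.1 j
    exact ⟨x, hℓ.orbit_eq_preimage x⟩
  have hne : ∀ {j k : Fin 3}, j ≠ k → ℓ ⁻¹' {j} ≠ ℓ ⁻¹' {k} := fun hjk =>
    hℓ.1.preimage_injective.ne (Set.singleton_injective.ne hjk)
  refine ⟨ℓ ⁻¹' {0}, ℓ ⁻¹' {1}, ℓ ⁻¹' {2}, hfiber 0, hfiber 1, hfiber 2,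
    hne (by decide), hne (by decide), hne (by decide), fun x => ?_,
    image_preimage_singleton_of_semiconj h0 (by decide),
    image_preimage_singleton_of_semiconj h0 (by decide),
    image_preimage_singleton_of_semiconj h0 (by decide),
    image_preimage_singleton_of_semiconj h2 (by decide),
    image_preimage_singleton_of_semiconj h2 (by decide),
    image_preimage_singleton_of_semiconj h2 (by decide),
    image_preimage_singleton_of_semiconj h1 (by decide),
    image_preimage_singleton_of_semiconj h1 (by decide),
    image_preimage_singleton_of_semiconj h1 (by decide)⟩
  rw [hℓ.orbit_eq_preimage]
  generalize ℓ x = j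
  fin_cases j <;> simp

theorem isOfType302_of_isType302Action {α : Type*} {t0 t1 t2 : Perm α} {ℓ : α → Fin 3}
    (hℓ : IsOrbitLabel (mapAut t0 t1 t2) ℓ) {τ0 τ1 τ2 : Perm (Fin 3)} (h0 : Semiconj ℓ t0 τ0)
    (h1 : Semiconj ℓ t1 τ1) (h2 : Semiconj ℓ t2 τ2) (hτ : IsType302Action τ0 τ1 τ2) :
    isOfType302 t0 t1 t2 := by
  obtain ⟨π, hπ0, hπ1, hπ2⟩ := hτ
  exact isOfType302_of_isOrbitLabel (hℓ.comp_equiv π) (hπ0.comp_left h0) (hπ1.comp_left h1)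
    (hπ2.comp_left h2)

theorem truncation_of_three_orbit_three_orbit_general
    {F : Type*} [Fintype F]
    (s0 s1 s2 : Equiv.Perm F)
    (hs0i : s0 * s0 = 1)
    (hs2i : s2 * s2 = 1)
    (hcomm : s0 * s2 = s2 * s0)
    (htrans : ∀ x y : F, ∃ g ∈ Subgroup.closure ({s0, s1, s2} : Set (Equiv.Perm F)), g x = y)
    (r0 r1 r2 : Equiv.Perm (F × Fin 3))
    (hr0 : ∀ Φ : F, r0 (Φ, 0) = (s1 Φ, 0) ∧ r0 (Φ, 1) = (s0 Φ, 1) ∧ r0 (Φ, 2) = (s1 Φ, 2))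
    (hr1 : ∀ Φ : F, r1 (Φ, 0) = (s2 Φ, 0) ∧ r1 (Φ, 1) = (Φ, 2) ∧ r1 (Φ, 2) = (Φ, 1))
    (hr2 : ∀ Φ : F, r2 (Φ, 0) = (Φ, 2) ∧ r2 (Φ, 1) = (s2 Φ, 1) ∧ r2 (Φ, 2) = (Φ, 0))
    (hM3 : Nat.card (MulAction.orbitRel.Quotient
      (↥(Subgroup.centralizer ({s0, s1, s2} : Set (Equiv.Perm F)))) F) = 3)
    (hTr3 : Nat.card (MulAction.orbitRel.Quotient
      (↥(Subgroup.centralizer ({r0, r1, r2} : Set (Equiv.Perm (F × Fin 3))))) (F × Fin 3)) = 3) :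
    isOfType302 s0 s1 s2 ∧ isOfType302 r0 r1 r2 := by
  have hT : IsTruncation_s16 s0 s1 s2 r0 r1 r2 := ⟨hr0, hr1, hr2⟩
  obtain ⟨ℓ, hℓ⟩ := exists_isOrbitLabel_of_card hM3
  obtain ⟨ℓ₀, hℓ₀⟩ := exists_isOrbitLabel_of_card hTr3
  obtain ⟨ℓ', hℓ', hℓℓ'⟩ := hℓ.exists_comp_eq hℓ₀ (hT.mem_orbit_iff htrans)
  obtain ⟨σ0, hσ0⟩ := hℓ.exists_perm_semiconj (mem_centralizer_mapAut (t := s0) (by simp))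
  obtain ⟨σ1, hσ1⟩ := hℓ.exists_perm_semiconj (mem_centralizer_mapAut (t := s1) (by simp))
  obtain ⟨σ2, hσ2⟩ := hℓ.exists_perm_semiconj (mem_centralizer_mapAut (t := s2) (by simp))
  obtain ⟨ρ0, hρ0⟩ := hℓ'.exists_perm_semiconj (mem_centralizer_mapAut (t := r0) (by simp))
  obtain ⟨ρ1, hρ1⟩ := hℓ'.exists_perm_semiconj (mem_centralizer_mapAut (t := r1) (by simp))
  obtain ⟨ρ2, hρ2⟩ := hℓ'.exists_perm_semiconj (mem_centralizer_mapAut (t := r2) (by simp))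
  obtain ⟨hM, hTr⟩ := hT.isType302Action hs0i hs2i hcomm htrans hℓ.1 hℓℓ'
    hσ0 hσ1 hσ2 hρ0 hρ1 hρ2
  exact ⟨isOfType302_of_isType302Action hℓ hσ0 hσ1 hσ2 hM,
    isOfType302_of_isType302Action hℓ' hρ0 hρ1 hρ2 hTr⟩

/-- if M and Tr(M) are both 3-orbit maps, then both are of type 3^{02}. -/
theorem truncation_of_three_orbit_three_orbit
    {F : Type*} [Fintype F] [Nonempty F]
    (s0 s1 s2 : Equiv.Perm F)
    (hs0i : s0 * s0 = 1) (hs0f : ∀ x, s0 x ≠ x)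
    (hs1i : s1 * s1 = 1) (hs1f : ∀ x, s1 x ≠ x)
    (hs2i : s2 * s2 = 1) (hs2f : ∀ x, s2 x ≠ x)
    (hcomm : s0 * s2 = s2 * s0)
    (hs02i : (s0 * s2) * (s0 * s2) = 1) (hs02f : ∀ x, (s0 * s2) x ≠ x)
    (htrans : ∀ x y : F, ∃ g ∈ Subgroup.closure ({s0, s1, s2} : Set (Equiv.Perm F)), g x = y)
    (r0 r1 r2 : Equiv.Perm (F × Fin 3))
    (hr0 : ∀ Φ : F, r0 (Φ, 0) = (s1 Φ, 0) ∧ r0 (Φ, 1) = (s0 Φ, 1) ∧ r0 (Φ, 2) = (s1 Φ, 2))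
    (hr1 : ∀ Φ : F, r1 (Φ, 0) = (s2 Φ, 0) ∧ r1 (Φ, 1) = (Φ, 2) ∧ r1 (Φ, 2) = (Φ, 1))
    (hr2 : ∀ Φ : F, r2 (Φ, 0) = (Φ, 2) ∧ r2 (Φ, 1) = (s2 Φ, 1) ∧ r2 (Φ, 2) = (Φ, 0))
    (hM3 : Nat.card (MulAction.orbitRel.Quotient
      (↥(Subgroup.centralizer ({s0, s1, s2} : Set (Equiv.Perm F)))) F) = 3)
    (hTr3 : Nat.card (MulAction.orbitRel.Quotient
      (↥(Subgroup.centralizer ({r0, r1, r2} : Set (Equiv.Perm (F × Fin 3))))) (F × Fin 3)) = 3) :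
    isOfType302 s0 s1 s2 ∧ isOfType302 r0 r1 r2 :=
  truncation_of_three_orbit_three_orbit_general s0 s1 s2 hs0i hs2i hcomm htrans r0 r1 r2 hr0 hr1 hr2
    hM3 hTr3
end

section
/- Let M be a map with flag set F and generators s0, s1, s2. Let the dual M* be the map on F with generators s*_i = s_{2-i}, let r*_0, r*_1, r*_2 be the truncation generators of Tr(M*) on F × {0,1,2}, and let r'_0, r'_1, r'_2 be the leapfrog generators of Le(M) on F × {0,1,2}. Then the bijection θ of F × {0,1,2} given by θ(Φ, i) = (Φ, i+1 mod 3) satisfies θ ∘ r'_j = r*_j ∘ θ for each j = 0,1,2; hence Le(M) is isomorphic, by a colour-preserving isomorphism of flag graphs, to Tr(M*). -/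
theorem Equiv.Perm.ext_prod_fin_three {α : Type*} {f g : Equiv.Perm (α × Fin 3)}
    (h0 : ∀ a, f (a, 0) = g (a, 0)) (h1 : ∀ a, f (a, 1) = g (a, 1))
    (h2 : ∀ a, f (a, 2) = g (a, 2)) : f = g := by
  ext1 ⟨a, i⟩
  fin_cases i
  exacts [h0 a, h1 a, h2 a]

theorem leapfrog_iso_truncation_of_dual_general
    {F : Type*}
    (s0 s1 s2 : Equiv.Perm F)
    -- truncation generators of the dual map M* (whose generators are s*_i = s_{2-i})
    (rs0 rs1 rs2 : Equiv.Perm (F × Fin 3))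
    (hrs0 : ∀ Φ : F, rs0 (Φ, 0) = (s1 Φ, 0) ∧ rs0 (Φ, 1) = (s2 Φ, 1) ∧ rs0 (Φ, 2) = (s1 Φ, 2))
    (hrs1 : ∀ Φ : F, rs1 (Φ, 0) = (s0 Φ, 0) ∧ rs1 (Φ, 1) = (Φ, 2) ∧ rs1 (Φ, 2) = (Φ, 1))
    (hrs2 : ∀ Φ : F, rs2 (Φ, 0) = (Φ, 2) ∧ rs2 (Φ, 1) = (s0 Φ, 1) ∧ rs2 (Φ, 2) = (Φ, 0))
    -- leapfrog generators of Le(M)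
    (l0 l1 l2 : Equiv.Perm (F × Fin 3))
    (hl0 : ∀ Φ : F, l0 (Φ, 0) = (s2 Φ, 0) ∧ l0 (Φ, 1) = (s1 Φ, 1) ∧ l0 (Φ, 2) = (s1 Φ, 2))
    (hl1 : ∀ Φ : F, l1 (Φ, 0) = (Φ, 1) ∧ l1 (Φ, 1) = (Φ, 0) ∧ l1 (Φ, 2) = (s0 Φ, 2))
    (hl2 : ∀ Φ : F, l2 (Φ, 0) = (s0 Φ, 0) ∧ l2 (Φ, 1) = (Φ, 2) ∧ l2 (Φ, 2) = (Φ, 1))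
    (θ : Equiv.Perm (F × Fin 3))
    (hθ : ∀ (Φ : F) (i : Fin 3), θ (Φ, i) = (Φ, i + 1)) :
    θ * l0 = rs0 * θ ∧ θ * l1 = rs1 * θ ∧ θ * l2 = rs2 * θ := by
  have h1 : (0 : Fin 3) + 1 = 1 := rfl
  have h2 : (1 : Fin 3) + 1 = 2 := rfl
  have h0 : (2 : Fin 3) + 1 = 0 := rfl
  refine ⟨?_, ?_, ?_⟩ <;> apply Equiv.Perm.ext_prod_fin_three <;> intro Φ <;>
    simp only [Equiv.Perm.mul_apply, hθ, hl0, hl1, hl2, hrs0, hrs1, hrs2, h0, h1, h2]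

/-- the bijection θ(Φ,i) = (Φ, i+1 mod 3) intertwines the leapfrog generators
of Le(M) with the truncation generators of Tr(M*); hence Le(M) ≅ Tr(M*) by a
colour-preserving isomorphism of flag graphs. -/
theorem leapfrog_iso_truncation_of_dual
    {F : Type*} [Fintype F] [Nonempty F]
    (s0 s1 s2 : Equiv.Perm F)
    (hs0i : s0 * s0 = 1) (hs0f : ∀ x, s0 x ≠ x)
    (hs1i : s1 * s1 = 1) (hs1f : ∀ x, s1 x ≠ x)
    (hs2i : s2 * s2 = 1) (hs2f : ∀ x, s2 x ≠ x)
    (hcomm : s0 * s2 = s2 * s0)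
    (hs02i : (s0 * s2) * (s0 * s2) = 1) (hs02f : ∀ x, (s0 * s2) x ≠ x)
    (htrans : ∀ x y : F, ∃ g ∈ Subgroup.closure ({s0, s1, s2} : Set (Equiv.Perm F)), g x = y)
    -- truncation generators of the dual map M* (whose generators are s*_i = s_{2-i})
    (rs0 rs1 rs2 : Equiv.Perm (F × Fin 3))
    (hrs0 : ∀ Φ : F, rs0 (Φ, 0) = (s1 Φ, 0) ∧ rs0 (Φ, 1) = (s2 Φ, 1) ∧ rs0 (Φ, 2) = (s1 Φ, 2))
    (hrs1 : ∀ Φ : F, rs1 (Φ, 0) = (s0 Φ, 0) ∧ rs1 (Φ, 1) = (Φ, 2) ∧ rs1 (Φ, 2) = (Φ, 1))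
    (hrs2 : ∀ Φ : F, rs2 (Φ, 0) = (Φ, 2) ∧ rs2 (Φ, 1) = (s0 Φ, 1) ∧ rs2 (Φ, 2) = (Φ, 0))
    -- leapfrog generators of Le(M)
    (l0 l1 l2 : Equiv.Perm (F × Fin 3))
    (hl0 : ∀ Φ : F, l0 (Φ, 0) = (s2 Φ, 0) ∧ l0 (Φ, 1) = (s1 Φ, 1) ∧ l0 (Φ, 2) = (s1 Φ, 2))
    (hl1 : ∀ Φ : F, l1 (Φ, 0) = (Φ, 1) ∧ l1 (Φ, 1) = (Φ, 0) ∧ l1 (Φ, 2) = (s0 Φ, 2))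
    (hl2 : ∀ Φ : F, l2 (Φ, 0) = (s0 Φ, 0) ∧ l2 (Φ, 1) = (Φ, 2) ∧ l2 (Φ, 2) = (Φ, 1))
    (θ : Equiv.Perm (F × Fin 3))
    (hθ : ∀ (Φ : F) (i : Fin 3), θ (Φ, i) = (Φ, i + 1)) :
    θ * l0 = rs0 * θ ∧ θ * l1 = rs1 * θ ∧ θ * l2 = rs2 * θ :=
  leapfrog_iso_truncation_of_dual_general s0 s1 s2 rs0 rs1 rs2 hrs0 hrs1 hrs2 l0 l1 l2 hl0 hl1 hl2 θ
    hθ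
end

section
/- Let M be a map with flag set F and generators s0, s1, s2, and let r'0, r'1, r'2 be the leapfrog generators on F × {0,1,2}, with Γ(Le(M)) the group of permutations of F × {0,1,2} commuting with r'0, r'1, r'2. If M is a k-orbit map, then the number n of orbits of Γ(Le(M)) on F × {0,1,2} satisfies: n = k, or n = 3k, or k is even and 2n = 3k (i.e. n = 3k/2). -/
/-!
The monodromy group of `Le(M)` is transitive on `F × Fin 3`: it lifts that of `M` on layer `0`,
and `l1`, `l2` connect the layers. Centralizers of transitive permutation groups act freely, so
`n * |Γ(Le M)| = 3 * |F|` and `k * |Γ(M)| = |F|`. Each leapfrog generator permutes the layers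
uniformly, so an automorphism of `Le(M)` keeping one flag in its layer keeps every flag in its
layer, and these automorphisms are exactly the `γ × id` with `γ ∈ Γ(M)`. Hence `Γ(M)` embeds in
`Γ(Le M)` with index `m ≤ 3` (a coset is determined by the layer it sends a fixed flag to), and
`n * m = 3 * k`.
-/

open Equiv Subgroup MulAction Pointwise

namespace Equiv.Perm

variable {α : Type*} {S : Set (Perm α)}

theorem apply_comm_of_mem_centralizer_s19 {δ g : Perm α} (hδ : δ ∈ centralizer S)
    (hg : g ∈ closure S) (x : α) : δ (g x) = g (δ x) := by
  rw [← centralizer_closure] at hδ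
  exact (DFunLike.congr_fun (mem_centralizer_iff.mp hδ g hg) x).symm

theorem mem_of_forall_apply_mem_iff {P : Set α} (hP : ∀ g ∈ S, ∀ x, g x ∈ P ↔ x ∈ P)
    (htrans : ∀ x y : α, ∃ g ∈ closure S, g x = y) {x : α} (hx : x ∈ P) (y : α) :
    y ∈ P := by
  obtain ⟨g, hg, rfl⟩ := htrans x y
  have hstab : closure S ≤ stabilizer (Perm α) P :=
    (closure_le _).mpr fun g hg ↦ mem_stabilizer_set.mpr (hP g hg)
  exact (mem_stabilizer_set.mp (hstab hg) x).mpr hx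

theorem stabilizer_centralizer_eq_bot (htrans : ∀ x y : α, ∃ g ∈ closure S, g x = y)
    (x : α) : stabilizer (centralizer S) x = ⊥ := by
  refine (eq_bot_iff_forall _).mpr fun δ hδ ↦ Subtype.ext <| Perm.ext fun y ↦ ?_
  obtain ⟨g, hg, rfl⟩ := htrans x y
  rw [apply_comm_of_mem_centralizer_s19 δ.2 hg, show (δ : Perm α) x = x from hδ]
  rfl

theorem card_orbitRel_quotient_centralizer_mul_card
    (htrans : ∀ x y : α, ∃ g ∈ closure S, g x = y) :
    Nat.card (orbitRel.Quotient (centralizer S) α) * Nat.card (centralizer S) = Nat.card α := by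
  rw [← Nat.card_prod]
  exact Nat.card_congr (selfEquivOrbitsQuotientProd (stabilizer_centralizer_eq_bot htrans)).symm

end Equiv.Perm

structure IsLeapfrog {F : Type*} (s0 s1 s2 : Perm F) (l0 l1 l2 : Perm (F × Fin 3)) : Prop where
  l0_apply : ∀ Φ, l0 (Φ, 0) = (s2 Φ, 0) ∧ l0 (Φ, 1) = (s1 Φ, 1) ∧ l0 (Φ, 2) = (s1 Φ, 2)
  l1_apply : ∀ Φ, l1 (Φ, 0) = (Φ, 1) ∧ l1 (Φ, 1) = (Φ, 0) ∧ l1 (Φ, 2) = (s0 Φ, 2)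
  l2_apply : ∀ Φ, l2 (Φ, 0) = (s0 Φ, 0) ∧ l2 (Φ, 1) = (Φ, 2) ∧ l2 (Φ, 2) = (Φ, 1)

namespace IsLeapfrog

variable {F : Type*} {s0 s1 s2 : Perm F} {l0 l1 l2 : Perm (F × Fin 3)}

theorem exists_perm_snd_apply (h : IsLeapfrog s0 s1 s2 l0 l1 l2) :
    ∀ l ∈ ({l0, l1, l2} : Set (Perm (F × Fin 3))),
      ∃ π : Perm (Fin 3), ∀ y, (l y).2 = π y.2 := by
  rintro l (rfl | rfl | rfl)
  · refine ⟨1, fun ⟨Φ, i⟩ ↦ ?_⟩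
    fin_cases i <;> simp [h.l0_apply]
  · refine ⟨swap 0 1, fun ⟨Φ, i⟩ ↦ ?_⟩
    fin_cases i <;> simp [h.l1_apply, swap_apply_of_ne_of_ne]
  · refine ⟨swap 1 2, fun ⟨Φ, i⟩ ↦ ?_⟩
    fin_cases i <;> simp [h.l2_apply, swap_apply_of_ne_of_ne]

theorem exists_mem_closure_apply_zero_eq (h : IsLeapfrog s0 s1 s2 l0 l1 l2) {g : Perm F}
    (hg : g ∈ closure {s0, s1, s2}) :
    ∃ g' ∈ closure {l0, l1, l2}, ∀ Φ : F, g' (Φ, 0) = (g Φ, 0) := by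
  induction hg using closure_induction with
  | mem g hg =>
    rcases hg with rfl | rfl | rfl
    · exact ⟨l2, subset_closure (by simp), fun Φ ↦ (h.l2_apply Φ).1⟩
    · refine ⟨l1 * l0 * l1, mul_mem (mul_mem (subset_closure (by simp))
        (subset_closure (by simp))) (subset_closure (by simp)), fun Φ ↦ ?_⟩
      simp [h.l0_apply, h.l1_apply]
    · exact ⟨l0, subset_closure (by simp), fun Φ ↦ (h.l0_apply Φ).1⟩
  | one => exact ⟨1, one_mem _, fun Φ ↦ rfl⟩
  | mul g₁ g₂ _ _ ih₁ ih₂ =>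
    obtain ⟨g₁', hg₁', e₁⟩ := ih₁
    obtain ⟨g₂', hg₂', e₂⟩ := ih₂
    exact ⟨g₁' * g₂', mul_mem hg₁' hg₂', fun Φ ↦ by simp [e₁, e₂]⟩
  | inv g _ ih =>
    obtain ⟨g', hg', e⟩ := ih
    refine ⟨g'⁻¹, inv_mem hg', fun Φ ↦ ?_⟩
    rw [Perm.inv_eq_iff_eq, e]
    simp

theorem exists_mem_closure_apply_eq (h : IsLeapfrog s0 s1 s2 l0 l1 l2) (Φ : F) (i : Fin 3) :
    ∃ g ∈ closure {l0, l1, l2}, g (Φ, 0) = (Φ, i) := by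
  fin_cases i
  · exact ⟨1, one_mem _, rfl⟩
  · exact ⟨l1, subset_closure (by simp), (h.l1_apply Φ).1⟩
  · exact ⟨l2 * l1, mul_mem (subset_closure (by simp)) (subset_closure (by simp)),
      by simp [h.l1_apply, h.l2_apply]⟩

theorem closure_transitive (h : IsLeapfrog s0 s1 s2 l0 l1 l2)
    (htrans : ∀ x y : F, ∃ g ∈ closure {s0, s1, s2}, g x = y) :
    ∀ x y : F × Fin 3, ∃ g ∈ closure {l0, l1, l2}, g x = y := by
  rintro ⟨Φ, i⟩ ⟨Ψ, j⟩
  obtain ⟨a, ha, ea⟩ := h.exists_mem_closure_apply_eq Φ i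
  obtain ⟨g, hg, rfl⟩ := htrans Φ Ψ
  obtain ⟨g', hg', e⟩ := h.exists_mem_closure_apply_zero_eq hg
  obtain ⟨b, hb, eb⟩ := h.exists_mem_closure_apply_eq (g Φ) j
  refine ⟨b * g' * a⁻¹, mul_mem (mul_mem hb hg') (inv_mem ha), ?_⟩
  have ea' : a⁻¹ (Φ, i) = (Φ, 0) := Perm.inv_eq_iff_eq.mpr ea.symm
  rw [Perm.mul_apply, Perm.mul_apply, ea', e, eb]

theorem snd_apply_eq_of_mem_centralizer (h : IsLeapfrog s0 s1 s2 l0 l1 l2)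
    (htrans : ∀ x y : F × Fin 3, ∃ g ∈ closure {l0, l1, l2}, g x = y)
    {δ : Perm (F × Fin 3)} (hδ : δ ∈ centralizer {l0, l1, l2}) {x : F × Fin 3}
    (hx : (δ x).2 = x.2) (y : F × Fin 3) : (δ y).2 = y.2 := by
  refine Perm.mem_of_forall_apply_mem_iff (P := {y | (δ y).2 = y.2}) (fun l hl z ↦ ?_)
    htrans hx y
  obtain ⟨π, hπ⟩ := h.exists_perm_snd_apply l hl
  simp only [Set.mem_ofPred_eq, Perm.apply_comm_of_mem_centralizer_s19 hδ (subset_closure hl), hπ,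
    π.injective.eq_iff]

theorem prodCongr_mem_centralizer (h : IsLeapfrog s0 s1 s2 l0 l1 l2) {γ : Perm F}
    (hγ : γ ∈ centralizer {s0, s1, s2}) :
    (prodCongr γ (Equiv.refl (Fin 3)) : Perm (F × Fin 3)) ∈ centralizer {l0, l1, l2} := by
  have hc : ∀ s ∈ ({s0, s1, s2} : Set (Perm F)), ∀ Φ, γ (s Φ) = s (γ Φ) :=
    fun s hs ↦ Perm.apply_comm_of_mem_centralizer_s19 hγ (subset_closure hs)
  have c0 := hc s0 (by simp)
  have c1 := hc s1 (by simp)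
  have c2 := hc s2 (by simp)
  rw [mem_centralizer_iff]
  rintro l (rfl | rfl | rfl) <;> refine Perm.ext fun ⟨Φ, i⟩ ↦ ?_ <;> fin_cases i <;>
    simp [h.l0_apply, h.l1_apply, h.l2_apply, c0, c1, c2]

def autHom (h : IsLeapfrog s0 s1 s2 l0 l1 l2) :
    centralizer {s0, s1, s2} →* centralizer {l0, l1, l2} where
  toFun γ := ⟨prodCongr γ (Equiv.refl (Fin 3)), h.prodCongr_mem_centralizer γ.2⟩
  map_one' := rfl
  map_mul' _ _ := rfl

theorem autHom_injective (h : IsLeapfrog s0 s1 s2 l0 l1 l2) : Function.Injective h.autHom :=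
  fun _ _ hγ ↦ Subtype.ext <| Perm.ext fun Φ ↦
    congrArg Prod.fst (DFunLike.congr_fun (congrArg Subtype.val hγ) (Φ, 0))

theorem exists_apply_eq_of_mem_centralizer [Finite F] (h : IsLeapfrog s0 s1 s2 l0 l1 l2)
    {δ : Perm (F × Fin 3)} (hδ : δ ∈ centralizer {l0, l1, l2})
    (hsnd : ∀ y, (δ y).2 = y.2) :
    ∃ γ : Perm F, ∀ Φ i, δ (Φ, i) = (γ Φ, i) := by
  have hc : ∀ l ∈ ({l0, l1, l2} : Set (Perm (F × Fin 3))), ∀ y, δ (l y) = l (δ y) :=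
    fun l hl ↦ Perm.apply_comm_of_mem_centralizer_s19 hδ (subset_closure hl)
  set γ : F → F := fun Φ ↦ (δ (Φ, 0)).1
  have e0 : ∀ Φ, δ (Φ, 0) = (γ Φ, 0) := fun Φ ↦ Prod.ext rfl (hsnd _)
  have e1 : ∀ Φ, δ (Φ, 1) = (γ Φ, 1) := fun Φ ↦ by
    simpa [h.l1_apply, e0] using hc l1 (by simp) (Φ, 0)
  have e2 : ∀ Φ, δ (Φ, 2) = (γ Φ, 2) := fun Φ ↦ by
    simpa [h.l2_apply, e1] using hc l2 (by simp) (Φ, 1)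
  have hγ : Function.Injective γ := fun Φ Ψ e ↦ by
    simpa using δ.injective (by rw [e0, e0, e] : δ (Φ, 0) = δ (Ψ, 0))
  refine ⟨Equiv.ofBijective γ (Finite.injective_iff_bijective.mp hγ), fun Φ i ↦ ?_⟩
  fin_cases i
  exacts [e0 Φ, e1 Φ, e2 Φ]

theorem mem_range_autHom_iff [Finite F] (h : IsLeapfrog s0 s1 s2 l0 l1 l2)
    (htrans : ∀ x y : F × Fin 3, ∃ g ∈ closure {l0, l1, l2}, g x = y)
    {δ : centralizer {l0, l1, l2}} (x : F × Fin 3) :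
    δ ∈ h.autHom.range ↔ ((δ : Perm (F × Fin 3)) x).2 = x.2 := by
  refine ⟨by rintro ⟨γ, rfl⟩; rfl, fun hx ↦ ?_⟩
  obtain ⟨γ, hγ⟩ := h.exists_apply_eq_of_mem_centralizer δ.2
    (h.snd_apply_eq_of_mem_centralizer htrans δ.2 hx)
  have hc : ∀ l ∈ ({l0, l1, l2} : Set (Perm (F × Fin 3))), ∀ y, δ.1 (l y) = l (δ.1 y) :=
    fun l hl ↦ Perm.apply_comm_of_mem_centralizer_s19 δ.2 (subset_closure hl)
  have hγ' : γ ∈ centralizer {s0, s1, s2} := by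
    rw [mem_centralizer_iff]
    rintro s (rfl | rfl | rfl) <;> refine Perm.ext fun Φ ↦ ?_
    · simpa [h.l2_apply, hγ] using (hc l2 (by simp) (Φ, 0)).symm
    · simpa [h.l0_apply, hγ] using (hc l0 (by simp) (Φ, 1)).symm
    · simpa [h.l0_apply, hγ] using (hc l0 (by simp) (Φ, 0)).symm
  exact ⟨⟨γ, hγ'⟩, Subtype.ext <| Perm.ext fun ⟨Φ, i⟩ ↦ (hγ Φ i).symm⟩

theorem index_range_autHom_le_three [Finite F] [Nonempty F] (h : IsLeapfrog s0 s1 s2 l0 l1 l2)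
    (htrans : ∀ x y : F × Fin 3, ∃ g ∈ closure {l0, l1, l2}, g x = y) :
    h.autHom.range.index ≤ 3 := by
  obtain ⟨Φ⟩ := ‹Nonempty F›
  have key : ∀ a b : centralizer {l0, l1, l2}, a⁻¹ * b ∈ h.autHom.range ↔
      (((a⁻¹ : centralizer {l0, l1, l2}) : Perm (F × Fin 3)) (Φ, 0)).2 =
      (((b⁻¹ : centralizer {l0, l1, l2}) : Perm (F × Fin 3)) (Φ, 0)).2 := by
    intro a b
    rw [h.mem_range_autHom_iff htrans (((b⁻¹ : centralizer {l0, l1, l2}) : Perm _) (Φ, 0))]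
    simp
  let layer : centralizer {l0, l1, l2} ⧸ h.autHom.range → Fin 3 :=
    Quotient.lift
      (fun δ ↦ (((δ⁻¹ : centralizer {l0, l1, l2}) : Perm (F × Fin 3)) (Φ, 0)).2)
      fun a b hab ↦ (key a b).mp (QuotientGroup.leftRel_apply.mp hab)
  have : Function.Injective layer := by
    rintro ⟨a⟩ ⟨b⟩ hab
    exact QuotientGroup.eq.mpr ((key a b).mpr hab)
  exact (Nat.card_le_card_of_injective layer this).trans_eq (Nat.card_fin 3)

end IsLeapfrog

theorem leapfrog_orbit_count_general
    {F : Type*} [Fintype F] [Nonempty F]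
    (s0 s1 s2 : Equiv.Perm F)
    (htrans : ∀ x y : F, ∃ g ∈ Subgroup.closure ({s0, s1, s2} : Set (Equiv.Perm F)), g x = y)
    (l0 l1 l2 : Equiv.Perm (F × Fin 3))
    (hl0 : ∀ Φ : F, l0 (Φ, 0) = (s2 Φ, 0) ∧ l0 (Φ, 1) = (s1 Φ, 1) ∧ l0 (Φ, 2) = (s1 Φ, 2))
    (hl1 : ∀ Φ : F, l1 (Φ, 0) = (Φ, 1) ∧ l1 (Φ, 1) = (Φ, 0) ∧ l1 (Φ, 2) = (s0 Φ, 2))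
    (hl2 : ∀ Φ : F, l2 (Φ, 0) = (s0 Φ, 0) ∧ l2 (Φ, 1) = (Φ, 2) ∧ l2 (Φ, 2) = (Φ, 1))
    (k : ℕ)
    (hk : Nat.card (MulAction.orbitRel.Quotient
      (↥(Subgroup.centralizer ({s0, s1, s2} : Set (Equiv.Perm F)))) F) = k) :
    Nat.card (MulAction.orbitRel.Quotient
      (↥(Subgroup.centralizer ({l0, l1, l2} : Set (Equiv.Perm (F × Fin 3))))) (F × Fin 3)) = k ∨
    Nat.card (MulAction.orbitRel.Quotient
      (↥(Subgroup.centralizer ({l0, l1, l2} : Set (Equiv.Perm (F × Fin 3))))) (F × Fin 3)) = 3 * k ∨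
    (Even k ∧ 2 * Nat.card (MulAction.orbitRel.Quotient
      (↥(Subgroup.centralizer ({l0, l1, l2} : Set (Equiv.Perm (F × Fin 3))))) (F × Fin 3)) = 3 * k) := by
  have h : IsLeapfrog s0 s1 s2 l0 l1 l2 := ⟨hl0, hl1, hl2⟩
  have htrans' := h.closure_transitive htrans
  set n := Nat.card
    (orbitRel.Quotient (centralizer ({l0, l1, l2} : Set (Perm (F × Fin 3)))) (F × Fin 3))
  set m := h.autHom.range.index
  have hM : k * Nat.card (centralizer ({s0, s1, s2} : Set (Perm F))) = Nat.card F :=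
    hk ▸ Perm.card_orbitRel_quotient_centralizer_mul_card htrans
  have hLe : n * Nat.card (centralizer ({l0, l1, l2} : Set (Perm (F × Fin 3)))) =
      Nat.card F * 3 := by
    rw [Perm.card_orbitRel_quotient_centralizer_mul_card htrans', Nat.card_prod, Nat.card_fin]
  have hindex : m * Nat.card (centralizer ({s0, s1, s2} : Set (Perm F))) =
      Nat.card (centralizer ({l0, l1, l2} : Set (Perm (F × Fin 3)))) := by
    rw [← index_mul_card h.autHom.range,
      Nat.card_congr (MonoidHom.ofInjective h.autHom_injective).toEquiv]
  have hm0 : 0 < m := Nat.pos_of_ne_zero index_ne_zero_of_finite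
  have hm3 : m ≤ 3 := h.index_range_autHom_le_three htrans'
  have hnm : n * m = 3 * k := Nat.eq_of_mul_eq_mul_right Nat.card_pos (by
    rw [mul_assoc, hindex, hLe, mul_assoc, hM, mul_comm])
  interval_cases m
  · exact Or.inr (Or.inl (by omega))
  · exact Or.inr (Or.inr ⟨Nat.even_iff.mpr (by omega), by omega⟩)
  · exact Or.inl (by omega)

/-- if M is a k-orbit map, then its leapfrog map Le(M) is a k-orbit,
3k-orbit, or (for k even) 3k/2-orbit map. -/
theorem leapfrog_orbit_count
    {F : Type*} [Fintype F] [Nonempty F]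
    (s0 s1 s2 : Equiv.Perm F)
    (hs0i : s0 * s0 = 1) (hs0f : ∀ x, s0 x ≠ x)
    (hs1i : s1 * s1 = 1) (hs1f : ∀ x, s1 x ≠ x)
    (hs2i : s2 * s2 = 1) (hs2f : ∀ x, s2 x ≠ x)
    (hcomm : s0 * s2 = s2 * s0)
    (hs02i : (s0 * s2) * (s0 * s2) = 1) (hs02f : ∀ x, (s0 * s2) x ≠ x)
    (htrans : ∀ x y : F, ∃ g ∈ Subgroup.closure ({s0, s1, s2} : Set (Equiv.Perm F)), g x = y)
    (l0 l1 l2 : Equiv.Perm (F × Fin 3))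
    (hl0 : ∀ Φ : F, l0 (Φ, 0) = (s2 Φ, 0) ∧ l0 (Φ, 1) = (s1 Φ, 1) ∧ l0 (Φ, 2) = (s1 Φ, 2))
    (hl1 : ∀ Φ : F, l1 (Φ, 0) = (Φ, 1) ∧ l1 (Φ, 1) = (Φ, 0) ∧ l1 (Φ, 2) = (s0 Φ, 2))
    (hl2 : ∀ Φ : F, l2 (Φ, 0) = (s0 Φ, 0) ∧ l2 (Φ, 1) = (Φ, 2) ∧ l2 (Φ, 2) = (Φ, 1))
    (k : ℕ)
    (hk : Nat.card (MulAction.orbitRel.Quotient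
      (↥(Subgroup.centralizer ({s0, s1, s2} : Set (Equiv.Perm F)))) F) = k) :
    Nat.card (MulAction.orbitRel.Quotient
      (↥(Subgroup.centralizer ({l0, l1, l2} : Set (Equiv.Perm (F × Fin 3))))) (F × Fin 3)) = k ∨
    Nat.card (MulAction.orbitRel.Quotient
      (↥(Subgroup.centralizer ({l0, l1, l2} : Set (Equiv.Perm (F × Fin 3))))) (F × Fin 3)) = 3 * k ∨
    (Even k ∧ 2 * Nat.card (MulAction.orbitRel.Quotient
      (↥(Subgroup.centralizer ({l0, l1, l2} : Set (Equiv.Perm (F × Fin 3))))) (F × Fin 3)) = 3 * k) :=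
  leapfrog_orbit_count_general s0 s1 s2 htrans l0 l1 l2 hl0 hl1 hl2 k hk
end
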